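/- arXiv:1710.06757 — 6 statements merged into one kernel-verified Lean document; each statement's English description precedes it below -/
import Mathlib

section
/- A 0/1-sequence (b_1,...,b_{2n}) is the outdegree sequence of some non-crossing perfect matching on 2n points in convex position if and only if it is a ballot sequence: it has exactly n ones and every prefix of length l satisfies sum_{i=1}^{l} b_i >= l/2. -/
/-- A plane (non-crossing) perfect matching on the `2n` points `0, …, 2n-1`
in convex position. -/
structure NCMatching (n : ℕ) where
  pairs : Finset (ℕ × ℕ)
  mem_lt : ∀ p ∈ pairs, p.1 < p.2 ∧ p.2 < 2 * n
  covers : ∀ v, v < 2 * n → ∃! p, p ∈ pairs ∧ (p.1 = v ∨ p.2 = v)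
  noncross : ∀ p ∈ pairs, ∀ q ∈ pairs, ¬ (p.1 < q.1 ∧ q.1 < p.2 ∧ p.2 < q.2)

/-- Outdegree of vertex `v` (1 if `v` is matched to a larger vertex, else 0). -/
def NCMatching.out {n : ℕ} (M : NCMatching n) (v : ℕ) : ℕ :=
  (M.pairs.filter fun p => p.1 = v).card

/-- The outdegree sequence `(b_1, …, b_{2n})` of a matching. -/
def NCMatching.outList {n : ℕ} (M : NCMatching n) : List ℕ :=
  (List.range (2 * n)).map M.out

/-- A triangulation of the convex polygon with vertices `0, …, n+1` in convex
position: a maximal set of pairwise non-crossing diagonals (`n-1` many). -/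
structure Triangulation (n : ℕ) where
  diag : Finset (ℕ × ℕ)
  isDiag : ∀ e ∈ diag, e.1 + 2 ≤ e.2 ∧ e.2 ≤ n + 1 ∧ ¬(e.1 = 0 ∧ e.2 = n + 1)
  noncross : ∀ e ∈ diag, ∀ f ∈ diag, ¬ (e.1 < f.1 ∧ f.1 < e.2 ∧ e.2 < f.2)
  card_diag : diag.card = n - 1

/-- Outdegree of point `i` in a triangulation: edges are directed from lower to
higher index; hull edges are not counted, except `p_1 p_{n+2}` (counted at `0`). -/
def Triangulation.out {n : ℕ} (T : Triangulation n) (i : ℕ) : ℕ :=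
  (T.diag.filter fun e => e.1 = i).card + (if i = 0 then 1 else 0)

/-- The outdegree sequence `(d_1, …, d_n)` of a triangulation. -/
def Triangulation.outList {n : ℕ} (T : Triangulation n) : List ℕ :=
  (List.range n).map T.out

/-- Ballot sequences of length `2n`: 0/1 sequences with `n` ones whose every
prefix has at least as many ones as zeros. -/
def IsBallot (n : ℕ) (l : List ℕ) : Prop :=
  l.length = 2 * n ∧ (∀ x ∈ l, x = 0 ∨ x = 1) ∧ l.sum = n ∧
    ∀ m, m ≤ 2 * n → m ≤ 2 * (l.take m).sum

/-- Valid outdegree sequences of triangulations of a convex `(n+2)`-gon. -/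
def IsTriDeg (n : ℕ) (d : List ℕ) : Prop :=
  d.length = n ∧ d.sum = n ∧ ∀ l, l ≤ n → (d.reverse.take l).sum ≤ l

/-- From a degree sequence `(d_1,…,d_n)` to the ballot sequence consisting of
`d_i` ones followed by a zero, for each `i`. -/
def degToBallot (d : List ℕ) : List ℕ :=
  (d.map fun x => List.replicate x 1 ++ [0]).flatten

/-- From a ballot sequence `B` to the sequence `(d_1,…,d_n)` where `d_i` is the
number of ones between the `(i-1)`-st and the `i`-th zero of `B`. -/
def ballotToDeg (B : List ℕ) : List ℕ :=
  ((B.splitOn 0).map List.length).dropLast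

/-- The bitonic `k`-coloring `c_1,…,c_k,c_k,…,c_1,c_1,…` of the vertices. -/
def bitColor (k i : ℕ) : ℕ :=
  if (i / k) % 2 = 0 then i % k else k - 1 - i % k

/-- A perfect `k`-colored (monochromatic) matching: every edge joins two
vertices of the same color. -/
def Mono (k : ℕ) {n : ℕ} (M : NCMatching n) : Prop :=
  ∀ p ∈ M.pairs, bitColor k p.1 = bitColor k p.2

/-- Valid block structure: within each block of `k` consecutive vertices, every
vertex with an outgoing edge is followed only by vertices with outgoing edges. -/
def ValidBlock (k : ℕ) {n : ℕ} (M : NCMatching n) : Prop :=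
  ∀ u v, v < 2 * n → u / k = v / k → u < v → M.out u = 1 → M.out v = 1

/-- The hull edges of the convex polygon on `0, …, n+1`. -/
def hullEdges (n : ℕ) : Finset (ℕ × ℕ) :=
  ((Finset.range (n + 1)).image fun i => (i, i + 1)) ∪ {(0, n + 1)}

/-- The edges of the face with vertex set `S` (in convex position): consecutive
pairs of `S` together with the pair `(min S, max S)`. -/
def faceEdges (S : Finset ℕ) : Finset (ℕ × ℕ) :=
  (S ×ˢ S).filter fun p => p.1 < p.2 ∧
    ((∀ c ∈ S, ¬ (p.1 < c ∧ c < p.2)) ∨ (∀ c ∈ S, p.1 ≤ c ∧ c ≤ p.2))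

/-- A `t`-gonal tiling of the convex polygon on the points `0, …, n+1`:
a plane graph all of whose bounded faces are `t`-gons, given by its set of
(bounded) faces. -/
structure Tiling (t n : ℕ) where
  faces : Finset (Finset ℕ)
  sub : ∀ S ∈ faces, S ⊆ Finset.range (n + 2)
  size : ∀ S ∈ faces, S.card = t
  noncross : ∀ S ∈ faces, ∀ S' ∈ faces, ∀ e ∈ faceEdges S, ∀ e' ∈ faceEdges S',
      ¬ (e.1 < e'.1 ∧ e'.1 < e.2 ∧ e.2 < e'.2)
  share : ∀ S ∈ faces, ∀ S' ∈ faces, S ≠ S' → (S ∩ S').card ≤ 2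
  boundary : ∀ e ∈ hullEdges n, (faces.filter fun S => e ∈ faceEdges S).card = 1
  interior : ∀ S ∈ faces, ∀ e ∈ faceEdges S, e ∉ hullEdges n →
      (faces.filter fun S' => e ∈ faceEdges S').card = 2

/-- The dual graph of a tiling: one vertex per bounded face, two faces adjacent
iff they share a common edge. -/
def dualGraph {t n : ℕ} (T : Tiling t n) : SimpleGraph {S // S ∈ T.faces} where
  Adj A B := A ≠ B ∧ (faceEdges A.1 ∩ faceEdges B.1).Nonempty
  symm := by
    constructor
    rintro A B ⟨h1, h2⟩
    exact ⟨Ne.symm h1, by rwa [Finset.inter_comm]⟩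
  loopless := by constructor; rintro A ⟨h, -⟩; exact h rfl

/-- An ear of a tiling: a face all but one of whose edges lie on the hull. -/
def IsEar {t n : ℕ} (T : Tiling t n) (S : Finset ℕ) : Prop :=
  S ∈ T.faces ∧ (faceEdges S \ hullEdges n).card = 1

/-- A tiling is a subgraph of a triangulation if each of its non-hull edges is
a diagonal of the triangulation. -/
def SubTri {t n : ℕ} (T : Tiling t n) (𝒯 : Triangulation n) : Prop :=
  ∀ S ∈ T.faces, ∀ e ∈ faceEdges S, e ∉ hullEdges n → e ∈ 𝒯.diag

/-- A triangulation is `k`-color valid if, under the outdegree-sequence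
bijection, it corresponds to a perfect `k`-colored matching. -/
def KColorValidTri (k : ℕ) {n : ℕ} (𝒯 : Triangulation n) : Prop :=
  ∃ M : NCMatching n, Mono k M ∧ M.outList = degToBallot 𝒯.outList

/-- A `(k+2)`-gonal tiling is `k`-color valid if it is a subgraph of some
`k`-color valid triangulation. -/
def KColorValidTiling (k : ℕ) {n : ℕ} (T : Tiling (k + 2) n) : Prop :=
  ∃ 𝒯 : Triangulation n, KColorValidTri k 𝒯 ∧ SubTri T 𝒯

/-! In a perfect matching with edges directed upwards, each of the first `m` vertices is the
tail or the head of exactly one edge, and every edge starts before it ends; so at least half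
of these vertices are tails.
Conversely, read a ballot sequence as a Dyck path (`1` up, `0` down) and match each up step
with the down step by which the path first returns to the level it started from. First
returns are nested, so this matching is non-crossing, and its tails are the up steps. -/

open Finset

lemma Finset.sum_range_card_filter_eq {ι : Type*} (s : Finset ι) (f : ι → ℕ) (m : ℕ) :
    ∑ v ∈ range m, #{p ∈ s | f p = v} = #{p ∈ s | f p < m} := by
  classical
  rw [card_eq_sum_card_fiberwise (f := f) (t := range m) fun p hp => by
    simpa using (mem_filter.1 hp).2]
  refine sum_congr rfl fun v hv => ?_
  rw [filter_filter]
  congr 1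
  ext p
  simp only [mem_filter, mem_range] at hv ⊢
  grind

lemma card_filter_fst_lt_add_card_filter_snd_lt {P : Finset (ℕ × ℕ)}
    (hlt : ∀ p ∈ P, p.1 < p.2) {m : ℕ}
    (hcov : ∀ v < m, ∃! p, p ∈ P ∧ (p.1 = v ∨ p.2 = v)) :
    #{p ∈ P | p.1 < m} + #{p ∈ P | p.2 < m} = m := by
  have hfiber : ∀ v < m, #{p ∈ P | p.1 = v} + #{p ∈ P | p.2 = v} = 1 := fun v hv => by
    rw [← card_union_of_disjoint, ← filter_or, card_eq_one]
    · obtain ⟨p, hp, huniq⟩ := hcov v hv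
      exact ⟨p, eq_singleton_iff_unique_mem.2
        ⟨mem_filter.2 hp, fun q hq => huniq q (mem_filter.1 hq)⟩⟩
    · exact disjoint_filter.2 fun p hp h1 h2 => (hlt p hp).ne (h1.trans h2.symm)
  rw [← sum_range_card_filter_eq, ← sum_range_card_filter_eq, ← sum_add_distrib,
    sum_congr rfl fun v hv => hfiber v (mem_range.1 hv), sum_const, card_range, smul_eq_mul,
    mul_one]

namespace NCMatching

variable {n : ℕ} (M : NCMatching n)

lemma sum_take_outList {m : ℕ} (hm : m ≤ 2 * n) :
    (M.outList.take m).sum = #{p ∈ M.pairs | p.1 < m} := by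
  rw [outList, ← List.map_take, List.take_range, Nat.min_eq_left hm, ← sum_range_card_filter_eq]
  rfl

lemma card_filter_fst_lt_add_card_filter_snd_lt {m : ℕ} (hm : m ≤ 2 * n) :
    #{p ∈ M.pairs | p.1 < m} + #{p ∈ M.pairs | p.2 < m} = m :=
  _root_.card_filter_fst_lt_add_card_filter_snd_lt (fun p hp => (M.mem_lt p hp).1)
    fun v hv => M.covers v (hv.trans_le hm)

lemma le_two_mul_sum_take_outList {m : ℕ} (hm : m ≤ 2 * n) :
    m ≤ 2 * (M.outList.take m).sum := by
  have hsnd_le_fst : #{p ∈ M.pairs | p.2 < m} ≤ #{p ∈ M.pairs | p.1 < m} :=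
    card_le_card (monotone_filter_right _ fun p hp h => (M.mem_lt p hp).1.trans h)
  have := M.card_filter_fst_lt_add_card_filter_snd_lt hm
  rw [M.sum_take_outList hm]
  omega

lemma sum_outList : M.outList.sum = n := by
  have hfst : {p ∈ M.pairs | p.1 < 2 * n} = M.pairs :=
    filter_true_of_mem fun p hp => (M.mem_lt p hp).1.trans (M.mem_lt p hp).2
  have hsnd : {p ∈ M.pairs | p.2 < 2 * n} = M.pairs :=
    filter_true_of_mem fun p hp => (M.mem_lt p hp).2
  have := M.card_filter_fst_lt_add_card_filter_snd_lt le_rfl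
  rw [hfst, hsnd] at this
  rw [← List.take_of_length_le (by simp [outList] : M.outList.length ≤ 2 * n),
    M.sum_take_outList le_rfl, hfst]
  omega

end NCMatching

structure IsDyckPath (h : ℕ → ℤ) (N : ℕ) : Prop where
  start : h 0 = 0
  finish : h N = 0
  nonneg : ∀ m ≤ N, 0 ≤ h m
  step : ∀ m < N, h (m + 1) = h m + 1 ∨ h (m + 1) = h m - 1

/-- `(a, b)` is a pair when `b + 1` is the first time after `a` at which the path `h` is back
at the level `h a`. -/
def returnPairs (h : ℕ → ℤ) (N : ℕ) : Finset (ℕ × ℕ) :=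
  {p ∈ range N ×ˢ range N | p.1 < p.2 ∧ h (p.2 + 1) = h p.1 ∧ ∀ m ∈ Ioc p.1 p.2, h p.1 < h m}

section returnPairs

variable {h : ℕ → ℤ} {N a b : ℕ}

lemma mem_returnPairs : (a, b) ∈ returnPairs h N ↔
    a < b ∧ b < N ∧ h (b + 1) = h a ∧ ∀ m, a < m → m ≤ b → h a < h m := by
  simp only [returnPairs, mem_filter, mem_product, mem_range, mem_Ioc, and_imp]
  grind

lemma lt_succ_of_mem_returnPairs (hp : (a, b) ∈ returnPairs h N) : h a < h (a + 1) := by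
  obtain ⟨hab, -, -, hmin⟩ := mem_returnPairs.1 hp
  exact hmin (a + 1) (by omega) hab

lemma succ_lt_of_mem_returnPairs (hp : (a, b) ∈ returnPairs h N) : h (b + 1) < h b := by
  obtain ⟨hab, -, hret, hmin⟩ := mem_returnPairs.1 hp
  exact hret ▸ hmin b hab le_rfl

lemma snd_eq_of_mem_returnPairs {b' : ℕ} (hp : (a, b) ∈ returnPairs h N)
    (hp' : (a, b') ∈ returnPairs h N) : b = b' := by
  obtain ⟨hab, -, hret, hmin⟩ := mem_returnPairs.1 hp
  obtain ⟨hab', -, hret', hmin'⟩ := mem_returnPairs.1 hp'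
  by_contra hne
  rcases Nat.lt_or_gt_of_ne hne with hlt | hlt
  · exact (hmin' (b + 1) (by omega) hlt).ne' hret
  · exact (hmin (b' + 1) (by omega) hlt).ne' hret'

lemma fst_eq_of_mem_returnPairs {a' : ℕ} (hp : (a, b) ∈ returnPairs h N)
    (hp' : (a', b) ∈ returnPairs h N) : a = a' := by
  obtain ⟨hab, -, hret, hmin⟩ := mem_returnPairs.1 hp
  obtain ⟨hab', -, hret', hmin'⟩ := mem_returnPairs.1 hp'
  by_contra hne
  rcases Nat.lt_or_gt_of_ne hne with hlt | hlt
  · exact (hmin a' hlt hab'.le).ne (hret.symm.trans hret')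
  · exact (hmin' a hlt hab.le).ne (hret'.symm.trans hret)

lemma not_crossing_of_mem_returnPairs {c d : ℕ} (hp : (a, b) ∈ returnPairs h N)
    (hq : (c, d) ∈ returnPairs h N) : ¬ (a < c ∧ c < b ∧ b < d) := by
  rintro ⟨hac, hcb, hbd⟩
  obtain ⟨-, -, hret, hmin⟩ := mem_returnPairs.1 hp
  obtain ⟨-, -, -, hmin'⟩ := mem_returnPairs.1 hq
  have := hmin c hac hcb.le
  have := hmin' (b + 1) (by omega) hbd
  omega

variable (hstep : ∀ m < N, h (m + 1) = h m + 1 ∨ h (m + 1) = h m - 1)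
include hstep

lemma exists_mem_returnPairs_of_lt_succ {v : ℕ} (hv : v < N) (hup : h v < h (v + 1))
    (hend : h N ≤ h v) : ∃ b, (v, b) ∈ returnPairs h N := by
  classical
  have hP : ∃ t, v < t ∧ h t ≤ h v := ⟨N, hv, hend⟩
  obtain ⟨t, ⟨hvt, hret⟩, htN, hmin⟩ : ∃ t, (v < t ∧ h t ≤ h v) ∧ t ≤ N ∧
      ∀ m, v < m → m < t → h v < h m :=
    ⟨Nat.find hP, Nat.find_spec hP, Nat.find_min' hP ⟨hv, hend⟩, fun m hvm hmt =>
      lt_of_not_ge fun hle => Nat.find_min hP hmt ⟨hvm, hle⟩⟩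
  obtain ⟨b, rfl⟩ : ∃ b, t = b + 1 := ⟨t - 1, by omega⟩
  have hvb : v < b := lt_of_le_of_ne (Nat.lt_succ_iff.1 hvt) fun heq => by
    rw [← heq] at hret; omega
  have hbefore := hmin b hvb (by omega)
  have hstep' := hstep b (by omega)
  exact ⟨b, mem_returnPairs.2 ⟨hvb, by omega, by omega, fun m hvm hmb => hmin m hvm (by omega)⟩⟩

lemma exists_mem_returnPairs_of_succ_lt {v : ℕ} (hv : v < N) (hdown : h (v + 1) < h v)
    (hstart : h 0 ≤ h (v + 1)) : ∃ a, (a, v) ∈ returnPairs h N := by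
  classical
  set s := Nat.findGreatest (fun s => h s ≤ h (v + 1)) v
  have hret : h s ≤ h (v + 1) := Nat.findGreatest_spec (P := fun s => h s ≤ h (v + 1))
    (Nat.zero_le v) hstart
  have hmin : ∀ m, s < m → m ≤ v → h (v + 1) < h m := fun m hsm hmv =>
    lt_of_not_ge (Nat.findGreatest_is_greatest hsm hmv)
  have hsv : s < v := lt_of_le_of_ne (Nat.findGreatest_le v) fun heq => by
    rw [heq] at hret; omega
  have hafter := hmin (s + 1) (by omega) hsv
  have hstep' := hstep s (by omega)
  exact ⟨s, mem_returnPairs.2 ⟨hsv, hv, by omega, fun m hsm hmv => by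
    have := hmin m hsm hmv; omega⟩⟩

end returnPairs

namespace NCMatching

variable {h : ℕ → ℤ} {n : ℕ}

def ofDyckPath (hh : IsDyckPath h (2 * n)) : NCMatching n where
  pairs := returnPairs h (2 * n)
  mem_lt p hp := by
    obtain ⟨hab, hb, -⟩ := mem_returnPairs.1 hp
    exact ⟨hab, hb⟩
  covers v hv := by
    rcases hh.step v hv with hup | hdown
    · obtain ⟨b, hb⟩ := exists_mem_returnPairs_of_lt_succ hh.step hv (by omega)
        (hh.finish ▸ hh.nonneg v hv.le)
      refine ⟨(v, b), ⟨hb, Or.inl rfl⟩, ?_⟩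
      rintro ⟨a', b'⟩ ⟨hp, hv' | hv'⟩ <;> dsimp only at hv' <;> subst hv'
      · rw [snd_eq_of_mem_returnPairs hp hb]
      · have := succ_lt_of_mem_returnPairs hp
        omega
    · obtain ⟨a, ha⟩ := exists_mem_returnPairs_of_succ_lt hh.step hv (by omega)
        (hh.start ▸ hh.nonneg (v + 1) hv)
      refine ⟨(a, v), ⟨ha, Or.inr rfl⟩, ?_⟩
      rintro ⟨a', b'⟩ ⟨hp, hv' | hv'⟩ <;> dsimp only at hv' <;> subst hv'
      · have := lt_succ_of_mem_returnPairs hp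
        omega
      · rw [fst_eq_of_mem_returnPairs hp ha]
  noncross p hp q hq := not_crossing_of_mem_returnPairs hp hq

lemma out_ofDyckPath (hh : IsDyckPath h (2 * n)) {v : ℕ} (hv : v < 2 * n) :
    (ofDyckPath hh).out v = if h v < h (v + 1) then 1 else 0 := by
  change #{p ∈ returnPairs h (2 * n) | p.1 = v} = _
  split_ifs with hup
  · obtain ⟨b, hb⟩ := exists_mem_returnPairs_of_lt_succ hh.step hv hup
      (hh.finish ▸ hh.nonneg v hv.le)
    refine card_eq_one.2 ⟨(v, b), eq_singleton_iff_unique_mem.2 ⟨mem_filter.2 ⟨hb, rfl⟩, ?_⟩⟩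
    rintro ⟨a', b'⟩ hp
    rw [mem_filter] at hp
    obtain ⟨hp, rfl⟩ := hp
    rw [snd_eq_of_mem_returnPairs hp hb]
  · exact card_eq_zero.2 <| filter_eq_empty_iff.2 fun p hp hpv =>
      hup (hpv ▸ lt_succ_of_mem_returnPairs (b := p.2) hp)

end NCMatching

def ballotHeight (l : List ℕ) (m : ℕ) : ℤ := 2 * ((l.take m).sum : ℤ) - m

section ballotHeight

variable {l : List ℕ}

lemma ballotHeight_succ {m : ℕ} (hm : m < l.length) :
    ballotHeight l (m + 1) = ballotHeight l m + 2 * l[m] - 1 := by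
  rw [ballotHeight, ballotHeight, List.sum_take_succ _ _ hm]
  push_cast
  ring

lemma ballotHeight_lt_succ_iff (h01 : ∀ x ∈ l, x = 0 ∨ x = 1) {m : ℕ} (hm : m < l.length) :
    ballotHeight l m < ballotHeight l (m + 1) ↔ l[m] = 1 := by
  rw [ballotHeight_succ hm, add_sub_assoc, lt_add_iff_pos_right, sub_pos]
  rcases h01 _ (l.getElem_mem hm) with h | h <;> simp [h]

lemma isDyckPath_ballotHeight {n : ℕ} (h01 : ∀ x ∈ l, x = 0 ∨ x = 1)
    (hlen : l.length = 2 * n) (hsum : l.sum = n)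
    (hpre : ∀ m, m ≤ 2 * n → m ≤ 2 * (l.take m).sum) :
    IsDyckPath (ballotHeight l) (2 * n) where
  start := by simp [ballotHeight]
  finish := by
    rw [ballotHeight, List.take_of_length_le hlen.le, hsum]
    push_cast
    ring
  nonneg m hm := by
    have := hpre m hm
    rw [ballotHeight]
    omega
  step m hm := by
    rw [ballotHeight_succ (hlen ▸ hm)]
    rcases h01 _ (l.getElem_mem (hlen ▸ hm)) with h | h <;> simp only [h] <;> push_cast <;> omega

end ballotHeight

/-- A 0/1-sequence is the outdegree sequence of some non-crossing perfect
matching on `2n` points iff it is a ballot sequence: it has exactly `n` ones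
and every prefix of length `l` has sum at least `l/2`. -/
theorem stmt4 (n : ℕ) (l : List ℕ) (h01 : ∀ x ∈ l, x = 0 ∨ x = 1)
    (hlen : l.length = 2 * n) :
    (∃ M : NCMatching n, M.outList = l) ↔
      (l.sum = n ∧ ∀ m, m ≤ 2 * n → m ≤ 2 * (l.take m).sum) := by
  constructor
  · rintro ⟨M, rfl⟩
    exact ⟨M.sum_outList, fun m hm => M.le_two_mul_sum_take_outList hm⟩
  · rintro ⟨hsum, hpre⟩
    refine ⟨.ofDyckPath (isDyckPath_ballotHeight h01 hlen hsum hpre),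
      List.ext_getElem (by simp [NCMatching.outList, hlen]) fun v _ hv => ?_⟩
    simp only [NCMatching.outList, List.getElem_map, List.getElem_range,
      NCMatching.out_ofDyckPath _ (hlen ▸ hv), ballotHeight_lt_succ_iff h01 hv]
    rcases h01 _ (l.getElem_mem hv) with h | h <;> simp [h]
end

section
/- Every non-crossing perfect matching is uniquely reconstructible from its outdegree sequence: two non-crossing perfect matchings on vertices 1,...,2n with the same outdegree sequence are equal. -/
namespace NCMatching

variable {n : ℕ}

theorem ext {M M' : NCMatching n} (h : M.pairs = M'.pairs) : M = M' := by
  cases M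
  cases M'
  subst h
  rfl

theorem eq_of_mem_of_common_endpoint (M : NCMatching n) {p q : ℕ × ℕ} {v : ℕ}
    (hp : p ∈ M.pairs) (hq : q ∈ M.pairs) (hpv : p.1 = v ∨ p.2 = v)
    (hqv : q.1 = v ∨ q.2 = v) : p = q := by
  have hv : v < 2 * n := by
    have := M.mem_lt p hp
    omega
  exact (M.covers v hv).unique ⟨hp, hpv⟩ ⟨hq, hqv⟩

theorem nested_of_endpoint_mem_Ioo (M : NCMatching n) {p q : ℕ × ℕ} {w : ℕ}
    (hp : p ∈ M.pairs) (hq : q ∈ M.pairs) (hqw : q.1 = w ∨ q.2 = w) (h₁ : p.1 < w)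
    (h₂ : w < p.2) :
    p.1 < q.1 ∧ q.2 < p.2 := by
  have hq₁₂ := (M.mem_lt q hq).1
  have hne₁ : q.1 ≠ p.1 := fun e => by
    have := M.eq_of_mem_of_common_endpoint hq hp (Or.inl e) (Or.inl rfl)
    subst this
    omega
  have hne₂ : q.2 ≠ p.2 := fun e => by
    have := M.eq_of_mem_of_common_endpoint hq hp (Or.inr e) (Or.inr rfl)
    subst this
    omega
  have hpq := M.noncross p hp q hq
  have hqp := M.noncross q hq p hp
  omega

theorem out_pos_iff (M : NCMatching n) {v : ℕ} : 0 < M.out v ↔ ∃ p ∈ M.pairs, p.1 = v := by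
  simp only [NCMatching.out, Finset.card_pos, Finset.filter_nonempty_iff]

theorem out_snd_eq_zero (M : NCMatching n) {p : ℕ × ℕ} (hp : p ∈ M.pairs) :
    M.out p.2 = 0 := by
  refine Nat.eq_zero_of_not_pos fun hpos => ?_
  obtain ⟨q, hq, hq₁⟩ := M.out_pos_iff.1 hpos
  have := M.eq_of_mem_of_common_endpoint hq hp (Or.inl hq₁) (Or.inr rfl)
  subst this
  exact absurd hq₁ (M.mem_lt q hq).1.ne

theorem mem_pairs_of_out_eq {A B : NCMatching n} (h : ∀ v, A.out v = B.out v) {p : ℕ × ℕ}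
    (hp : p ∈ A.pairs) : p ∈ B.pairs := by
  obtain ⟨hp₁₂, hp₂⟩ := A.mem_lt p hp
  have inside : ∀ r ∈ B.pairs, ∀ w, (r.1 = w ∨ r.2 = w) → p.1 < w → w < p.2 →
      p.1 < r.1 ∧ r.2 < p.2 := by
    intro r hr w hrw h₁ h₂
    obtain ⟨q, ⟨hq, hqw⟩, -⟩ := A.covers w (by omega)
    have hnest := A.nested_of_endpoint_mem_Ioo hp hq hqw h₁ h₂
    have hqB : q ∈ B.pairs := mem_pairs_of_out_eq h hq
    rwa [B.eq_of_mem_of_common_endpoint hr hqB hrw hqw]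
  obtain ⟨r, hr, hr₁⟩ := B.out_pos_iff.1 (h p.1 ▸ A.out_pos_iff.2 ⟨p, hp, rfl⟩)
  obtain ⟨s, ⟨hs, hsp⟩, -⟩ := B.covers p.2 hp₂
  have hs₂ : s.2 = p.2 := hsp.resolve_left fun hs₁ => by
    have hpos := B.out_pos_iff.2 ⟨s, hs, hs₁⟩
    rw [← h, A.out_snd_eq_zero hp] at hpos
    exact hpos.false
  have hr₁₂ := (B.mem_lt r hr).1
  have hs₁₂ := (B.mem_lt s hs).1
  have hr₂ : p.2 ≤ r.2 := by
    by_contra hlt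
    have := inside r hr r.2 (Or.inr rfl) (by omega) (by omega)
    omega
  have hs₁ : s.1 ≤ p.1 := by
    by_contra hlt
    have := inside s hs s.1 (Or.inl rfl) (by omega) (by omega)
    omega
  have hrs : r = s := by
    by_contra hne
    have : s.1 ≠ p.1 := fun e =>
      hne (B.eq_of_mem_of_common_endpoint hr hs (Or.inl hr₁) (Or.inl e))
    have : r.2 ≠ p.2 := fun e =>
      hne (B.eq_of_mem_of_common_endpoint hr hs (Or.inr e) (Or.inr hs₂))
    exact B.noncross s hs r hr ⟨by omega, by omega, by omega⟩
  rwa [← Prod.ext hr₁ (hrs ▸ hs₂)]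
termination_by p.2 - p.1
decreasing_by omega

end NCMatching

/-- Two non-crossing perfect matchings on `2n` points with the same outdegree
sequence are equal. -/
theorem stmt5 (n : ℕ) (M M' : NCMatching n) (h : ∀ v, M.out v = M'.out v) :
    M = M' :=
  NCMatching.ext <| Finset.Subset.antisymm (fun _ => NCMatching.mem_pairs_of_out_eq h)
    (fun _ => NCMatching.mem_pairs_of_out_eq fun v => (h v).symm)
end

section
/- A sequence of nonnegative integers (d_1,...,d_n) is the outdegree sequence of some triangulation of a convex (n+2)-gon if and only if sum_{i=1}^n d_i = n and for every l with 1 <= l <= n, sum_{i=1}^{l} d_{n+1-i} <= l. -/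
/-!
Counting diagonals by their left endpoint gives `∑ dᵢ = (n - 1) + 1`. The diagonals leaving the
last `l` points are pairwise non-crossing chords of the convex polygon on the last `l + 2`
vertices, and a convex polygon with `m` vertices has at most `m - 2` such chords (its closing edge
included): removing a vertex inside a shortest chord destroys only that chord.

Conversely, let `p_j` be the last point of positive outdegree in a valid sequence. Lowering `d_j`
by one leaves a valid sequence of length `n - 1`; a triangulation realising it realises `d` once a
new vertex is inserted after `p_j` and cut off by the ear diagonal `p_j p_{j+2}`.
-/

open Finset

theorem List.sum_take_eq_sum_range_getD {M : Type*} [AddCommMonoid M] (l : List M) (t : ℕ) :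
    (l.take t).sum = ∑ i ∈ Finset.range t, l.getD i 0 := by
  induction l generalizing t with
  | nil => simp
  | cons a l ih => cases t <;> simp [Finset.sum_range_succ', ih, add_comm]

theorem List.sum_take_reverse_add_sum_take {M : Type*} [AddCommMonoid M] (l : List M) (k : ℕ) :
    (l.reverse.take k).sum + (l.take (l.length - k)).sum = l.sum := by
  rw [take_reverse, sum_reverse, add_comm, sum_take_add_sum_drop]

theorem card_le_card_sub_two_of_noncrossing {V : Finset ℕ} {S : Finset (ℕ × ℕ)}
    (hS : ∀ e ∈ S, e.1 ∈ V ∧ e.2 ∈ V ∧ ∃ v ∈ V, e.1 < v ∧ v < e.2)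
    (hnc : ∀ e ∈ S, ∀ f ∈ S, ¬ (e.1 < f.1 ∧ f.1 < e.2 ∧ e.2 < f.2)) :
    #S ≤ #V - 2 := by
  induction V using Finset.strongInduction generalizing S with
  | H V ih =>
  obtain rfl | hne := S.eq_empty_or_nonempty
  · simp
  obtain ⟨c, hc, hmin⟩ := S.exists_min_image (fun e => e.2 - e.1) hne
  obtain ⟨hc₁, hc₂, v, hv, hcv, hvc⟩ := hS c hc
  -- A shortest chord `c` contains no other chord, so a vertex `v` inside it is an endpoint of no
  -- chord, and every other chord still has a vertex of `V.erase v` strictly inside.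
  have hS' : ∀ e ∈ S.erase c, e.1 ∈ V.erase v ∧ e.2 ∈ V.erase v ∧
      ∃ w ∈ V.erase v, e.1 < w ∧ w < e.2 := by
    intro e he
    obtain ⟨hec, heS⟩ := mem_erase.mp he
    obtain ⟨he₁, he₂, u, hu, heu, hue⟩ := hS e heS
    have hlen := hmin e heS
    have hce := hnc c hc e heS
    have hec' := hnc e heS c hc
    have hne' : e.1 ≠ c.1 ∨ e.2 ≠ c.2 := by
      by_contra! h; exact hec (Prod.ext h.1 h.2)
    refine ⟨mem_erase.mpr ⟨by omega, he₁⟩, mem_erase.mpr ⟨by omega, he₂⟩, ?_⟩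
    by_cases huv : u = v
    · by_cases h : e.1 < c.1
      · exact ⟨c.1, mem_erase.mpr ⟨by omega, hc₁⟩, by omega, by omega⟩
      · exact ⟨c.2, mem_erase.mpr ⟨by omega, hc₂⟩, by omega, by omega⟩
    · exact ⟨u, mem_erase.mpr ⟨huv, hu⟩, heu, hue⟩
  have hcard := ih (V.erase v) (erase_ssubset hv) hS'
    (fun e he f hf => hnc e (mem_of_mem_erase he) f (mem_of_mem_erase hf))
  have hV : 2 < #V := two_lt_card.mpr ⟨c.1, hc₁, v, hv, c.2, hc₂, by omega, by omega, by omega⟩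
  rw [card_erase_of_mem hc, card_erase_of_mem hv] at hcard
  omega

def succAbove (p z : ℕ) : ℕ := if z < p then z else z + 1

theorem succAbove_injective (p : ℕ) : Function.Injective (succAbove p) := by
  intro z w h; unfold succAbove at h; split_ifs at h <;> omega

theorem prodMap_id_succAbove_injective (p : ℕ) :
    Function.Injective (Prod.map (id : ℕ → ℕ) (succAbove p)) :=
  Function.injective_id.prodMap (succAbove_injective p)

/-- `D i` plays the role of `d_{i+1}`; given the total, the suffix condition `∑_{i ≥ n - l} D i ≤ l`
becomes the prefix condition `t ≤ ∑_{i < t} D i`. -/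
def IsOutdegreeSeq (n : ℕ) (D : ℕ → ℕ) : Prop :=
  (∀ i, n ≤ i → D i = 0) ∧ ∑ i ∈ range n, D i = n ∧ ∀ t ≤ n, t ≤ ∑ i ∈ range t, D i

theorem IsOutdegreeSeq.sub_single_last {n j : ℕ} {D : ℕ → ℕ} (hD : IsOutdegreeSeq (n + 1) D)
    (hj : j ≤ n) (hDj : 0 < D j) (hlast : ∀ i, j < i → D i = 0) :
    IsOutdegreeSeq n fun i => D i - if i = j then 1 else 0 := by
  obtain ⟨-, hsum, hpre⟩ := hD
  set D' := fun i => D i - if i = j then 1 else 0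
  have hsplit : ∀ t, ∑ i ∈ range t, D i = ∑ i ∈ range t, D' i + if j < t then 1 else 0 := by
    intro t
    calc ∑ i ∈ range t, D i = ∑ i ∈ range t, (D' i + if i = j then 1 else 0) :=
          sum_congr rfl fun i _ => by
            simp only [D']
            split_ifs with h
            · subst h; omega
            · omega
      _ = _ := by simp only [sum_add_distrib, sum_ite_eq', mem_range]
  have htail : ∀ t, j < t → t ≤ n + 1 → ∑ i ∈ range t, D i = n + 1 := by
    intro t hjt ht
    have := sum_range_add_sum_Ico D ht
    rwa [sum_eq_zero (s := Ico t (n + 1)) fun i hi => hlast i (hjt.trans_le (mem_Ico.mp hi).1),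
      add_zero, hsum] at this
  have hDn : D n ≤ 1 := by
    have := hpre n (by omega)
    rw [sum_range_succ] at hsum
    omega
  refine ⟨fun i hi => ?_, ?_, fun t ht => ?_⟩
  · simp only [D']
    split_ifs with h
    · obtain rfl : i = n := by omega
      omega
    · rw [hlast i (by omega)]
  · have hsplit_n := hsplit n
    rcases hj.lt_or_eq with hjn | rfl
    · rw [htail n hjn (by omega), if_pos hjn] at hsplit_n
      omega
    · rw [if_neg (lt_irrefl j)] at hsplit_n
      have := hpre j (by omega)
      rw [sum_range_succ] at hsum
      omega
  · have := hsplit t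
    by_cases hjt : j < t
    · rw [htail t hjt (by omega), if_pos hjt] at this
      omega
    · rw [if_neg hjt] at this
      have := hpre t (by omega)
      omega

namespace Triangulation

variable {n : ℕ} (T : Triangulation n)

theorem sum_out (s : Finset ℕ) :
    ∑ i ∈ s, T.out i = #{e ∈ T.diag | e.1 ∈ s} + if 0 ∈ s then 1 else 0 := by
  simp only [out, sum_add_distrib, sum_card_fiberwise_eq_card_filter, sum_ite_eq']

theorem sum_range_out : ∑ i ∈ range n, T.out i = n := by
  rw [sum_out, filter_true_of_mem fun e he => mem_range.mpr (by have := T.isDiag e he; omega),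
    T.card_diag]
  simp only [mem_range]
  split_ifs <;> omega

theorem sum_Ico_out_le {t : ℕ} (ht : 0 < t) : ∑ i ∈ Ico t n, T.out i ≤ n - t := by
  rw [sum_out, if_neg (by rw [mem_Ico]; omega), add_zero]
  have hchords := card_le_card_sub_two_of_noncrossing (V := Icc t (n + 1))
    (S := {e ∈ T.diag | e.1 ∈ Ico t n})
    (fun e he => by
      obtain ⟨he, he₁⟩ := mem_filter.mp he
      have := T.isDiag e he
      simp only [mem_Ico] at he₁
      exact ⟨mem_Icc.mpr ⟨he₁.1, by omega⟩, mem_Icc.mpr ⟨by omega, this.2.1⟩,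
        e.1 + 1, mem_Icc.mpr ⟨by omega, by omega⟩, by omega, by omega⟩)
    (fun e he f hf => T.noncross e (mem_filter.mp he).1 f (mem_filter.mp hf).1)
  rw [Nat.card_Icc] at hchords
  omega

theorem le_sum_range_out {t : ℕ} (ht : t ≤ n) : t ≤ ∑ i ∈ range t, T.out i := by
  obtain rfl | ht₀ := t.eq_zero_or_pos
  · exact Nat.zero_le _
  have hsplit := sum_range_add_sum_Ico T.out ht
  have := T.sum_Ico_out_le ht₀
  rw [T.sum_range_out] at hsplit
  omega

theorem isOutdegreeSeq_out (hn : 0 < n) : IsOutdegreeSeq n T.out := by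
  refine ⟨fun i hi => ?_, T.sum_range_out, fun t ht => T.le_sum_range_out ht⟩
  rw [out, filter_false_of_mem fun e he => by have := T.isDiag e he; omega]
  simp only [card_empty, zero_add, ite_eq_right_iff]
  omega

theorem outList_eq_iff (hn : 0 < n) {d : List ℕ} (hlen : d.length = n) :
    T.outList = d ↔ T.out = fun i => d.getD i 0 := by
  constructor
  · rintro rfl
    funext i
    by_cases hi : i < n
    · simp [outList, List.getD_eq_getElem?_getD, hi]
    · rw [(T.isOutdegreeSeq_out hn).1 i (by omega),
        List.getD_eq_default _ _ (by simp [outList]; omega)]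
  · intro hT
    refine List.ext_getElem (by simp [outList, hlen]) fun i h₁ h₂ => ?_
    simp [outList, hT, h₂]

theorem ear_notMem_image (j : ℕ) :
    (j, j + 2) ∉ T.diag.image (Prod.map id (succAbove (j + 1))) := by
  simp only [mem_image, not_exists, not_and]
  intro e he h
  have := T.isDiag e he
  simp only [Prod.map, Prod.mk.injEq, id, succAbove] at h
  split_ifs at h <;> omega

/-- Cut off a new vertex `j + 1` by the diagonal `(j, j + 2)`, moving the vertices above `j` up
by one. -/
def insertEar (hn : 0 < n) {j : ℕ} (hj : j ≤ n) (hdiag : ∀ e ∈ T.diag, e.1 ≤ j) :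
    Triangulation (n + 1) where
  diag := insert (j, j + 2) (T.diag.image (Prod.map id (succAbove (j + 1))))
  isDiag := by
    simp only [mem_insert, mem_image]
    rintro _ (rfl | ⟨e, he, rfl⟩)
    · omega
    · have := T.isDiag e he; have := hdiag e he
      simp only [Prod.map, id, succAbove]; split_ifs <;> omega
  noncross := by
    simp only [mem_insert, mem_image]
    rintro _ (rfl | ⟨e, he, rfl⟩) _ (rfl | ⟨f, hf, rfl⟩)
    · omega
    · have := hdiag f hf; simp only [Prod.map, id]; omega
    · have := hdiag e he; simp only [Prod.map, id, succAbove]; split_ifs <;> omega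
    · have := T.noncross e he f hf; have := hdiag e he; have := hdiag f hf
      simp only [Prod.map, id, succAbove]; split_ifs <;> omega
  card_diag := by
    rw [card_insert_of_notMem (T.ear_notMem_image j),
      card_image_of_injective _ (prodMap_id_succAbove_injective _),
      T.card_diag]
    omega

theorem out_insertEar (hn : 0 < n) {j : ℕ} (hj : j ≤ n) (hdiag : ∀ e ∈ T.diag, e.1 ≤ j)
    (i : ℕ) : (T.insertEar hn hj hdiag).out i = T.out i + if i = j then 1 else 0 := by
  have himage : #((T.diag.filter (·.1 = i)).image (Prod.map id (succAbove (j + 1)))) =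
      #(T.diag.filter (·.1 = i)) :=
    card_image_of_injective _ (prodMap_id_succAbove_injective _)
  simp only [out, insertEar, filter_insert, filter_image, Prod.map_fst, id]
  by_cases h : j = i
  · subst h
    rw [if_pos rfl, if_pos rfl, card_insert_of_notMem
      fun h => T.ear_notMem_image _ (image_subset_image (filter_subset _ _) h), himage]
    omega
  · rw [if_neg h, if_neg (Ne.symm h), himage, add_zero]

end Triangulation

theorem IsOutdegreeSeq.exists_triangulation {n : ℕ} (hn : 0 < n) {D : ℕ → ℕ}
    (hD : IsOutdegreeSeq n D) : ∃ T : Triangulation n, T.out = D := by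
  induction n, hn using Nat.le_induction generalizing D with
  | base =>
    refine ⟨⟨∅, by simp, by simp, by simp⟩, funext fun i => ?_⟩
    obtain ⟨hzero, hsum, -⟩ := hD
    rcases i with _ | i
    · simpa [Triangulation.out] using hsum.symm
    · simp [Triangulation.out, hzero (i + 1) (by omega)]
  | succ n hn ih =>
    obtain ⟨m, hm, hDm⟩ : ∃ m ∈ range (n + 1), D m ≠ 0 :=
      exists_ne_zero_of_sum_ne_zero (by rw [hD.2.1]; omega)
    set j := Nat.findGreatest (0 < D ·) n
    have hj : j ≤ n := Nat.findGreatest_le n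
    have hDj : 0 < D j :=
      Nat.findGreatest_spec (P := (0 < D ·)) (mem_range_succ_iff.mp hm) (Nat.pos_of_ne_zero hDm)
    have hlast : ∀ i, j < i → D i = 0 := fun i hi => by
      by_cases hin : i ≤ n
      · simpa using Nat.findGreatest_is_greatest hi hin
      · exact hD.1 i (by omega)
    obtain ⟨T, hT⟩ := ih (hD.sub_single_last hj hDj hlast)
    have hdiag : ∀ e ∈ T.diag, e.1 ≤ j := by
      intro e he
      by_contra! hje
      have hpos : 0 < #{f ∈ T.diag | f.1 = e.1} := card_pos.mpr ⟨e, mem_filter.mpr ⟨he, rfl⟩⟩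
      have := congrFun hT e.1
      simp only [Triangulation.out, hlast _ hje, zero_tsub] at this
      omega
    refine ⟨T.insertEar hn hj hdiag, funext fun i => ?_⟩
    rw [T.out_insertEar, hT]
    dsimp only
    split_ifs with h
    · rw [h]; omega
    · simp

theorem isOutdegreeSeq_getD_iff {n : ℕ} {d : List ℕ} (hlen : d.length = n) :
    IsOutdegreeSeq n (d.getD · 0) ↔ d.sum = n ∧ ∀ l ≤ n, (d.reverse.take l).sum ≤ l := by
  have hsum : d.sum = ∑ i ∈ range n, d.getD i 0 := by
    rw [← d.sum_take_eq_sum_range_getD, ← hlen, List.take_length]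
  have hsuffix (l : ℕ) : (d.reverse.take l).sum + ∑ i ∈ range (n - l), d.getD i 0 = d.sum := by
    rw [← d.sum_take_eq_sum_range_getD, ← hlen, List.sum_take_reverse_add_sum_take]
  simp only [IsOutdegreeSeq]
  constructor
  · rintro ⟨-, htotal, hprefix⟩
    refine ⟨hsum.trans htotal, fun l hl => ?_⟩
    have := hsuffix l
    have := hprefix (n - l) (by omega)
    omega
  · rintro ⟨htotal, hsuffix_le⟩
    refine ⟨fun i hi => List.getD_eq_default _ _ (by omega), hsum.symm.trans htotal,
      fun t ht => ?_⟩
    have := hsuffix (n - t)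
    have := hsuffix_le (n - t) (by omega)
    rw [Nat.sub_sub_self ht] at *
    omega

/-- A sequence `(d_1,…,d_n)` is the outdegree sequence of some triangulation of
a convex `(n+2)`-gon iff its entries sum to `n` and every suffix of length `l`
has sum at most `l`. -/
theorem stmt6 (n : ℕ) (d : List ℕ) (hlen : d.length = n) :
    (∃ T : Triangulation n, T.outList = d) ↔
      (d.sum = n ∧ ∀ l, l ≤ n → (d.reverse.take l).sum ≤ l) := by
  obtain rfl | hn := n.eq_zero_or_pos
  · obtain rfl := List.length_eq_zero_iff.mp hlen
    exact iff_of_true ⟨⟨∅, by simp, by simp, rfl⟩, rfl⟩ ⟨rfl, by simp⟩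
  rw [exists_congr fun T => T.outList_eq_iff hn hlen, ← isOutdegreeSeq_getD_iff hlen]
  exact ⟨fun ⟨T, hT⟩ => hT ▸ T.isOutdegreeSeq_out hn, fun hd => hd.exists_triangulation hn⟩
end

section
/- Two triangulations of a convex (n+2)-gon with the same outdegree sequence (d_1,...,d_n) are equal. -/
/-! The diagonals together with the edge `p_1 p_{n+2}` form a set `E` of `n` pairwise
non-crossing edges, and a set of non-crossing chords of a convex `m`-gon has at most `m - 3`
elements. Applying this bound to the polygons inside and outside a segment `(a, c)` and comparing
with `#E = n` gives, for `N_a(c) = #{(a, x) ∈ E | x ≤ c}`,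
* `a + 1 + ∑_{a<v<b} d_v + N_a(b) ≤ b` for every edge `(a, b) ∈ E`,
* `c ≤ a + 1 + ∑_{a<v<c} d_v + N_a(c)` whenever `a < c ≤ β` for some edge `(a, β) ∈ E`.
If two triangulations with the same outdegrees had different edges at `a`, then at the first
`c` where `N_a(c)` differs, one of them has the edge `(a, c)` and the other an edge `(a, β)` with
`β > c`, and the two inequalities contradict each other. -/

open Finset

def Crosses (e f : ℕ × ℕ) : Prop :=
  e.1 < f.1 ∧ f.1 < e.2 ∧ e.2 < f.2

/-- `e` joins two vertices of the convex polygon with vertex set `V` and is not one of its sides. -/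
def IsChord (V : Finset ℕ) (e : ℕ × ℕ) : Prop :=
  e.1 ∈ V ∧ e.2 ∈ V ∧ (∃ v ∈ V, e.1 < v ∧ v < e.2) ∧ ∃ v ∈ V, v < e.1 ∨ e.2 < v

def chordInner (V : Finset ℕ) (e : ℕ × ℕ) : Finset ℕ := V.filter fun v => e.1 ≤ v ∧ v ≤ e.2

def chordOuter (V : Finset ℕ) (e : ℕ × ℕ) : Finset ℕ := V.filter fun v => v ≤ e.1 ∨ e.2 ≤ v

namespace IsChord

variable {V : Finset ℕ} {e f : ℕ × ℕ}

theorem fst_lt_snd (he : IsChord V e) : e.1 < e.2 := by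
  obtain ⟨-, -, ⟨v, -, h1, h2⟩, -⟩ := he
  omega

theorem two_lt_card_chordInner (he : IsChord V e) : 2 < #(chordInner V e) := by
  obtain ⟨he1, he2, ⟨u, hu, hu1, hu2⟩, -⟩ := he
  exact two_lt_card.2 ⟨e.1, mem_filter.2 ⟨he1, by omega⟩, u, mem_filter.2 ⟨hu, by omega⟩,
    e.2, mem_filter.2 ⟨he2, by omega⟩, by omega, by omega, by omega⟩

theorem two_lt_card_chordOuter (he : IsChord V e) : 2 < #(chordOuter V e) := by
  have := he.fst_lt_snd
  obtain ⟨he1, he2, -, ⟨w, hw, hw'⟩⟩ := he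
  exact two_lt_card.2 ⟨e.1, mem_filter.2 ⟨he1, by omega⟩, e.2, mem_filter.2 ⟨he2, by omega⟩,
    w, mem_filter.2 ⟨hw, by omega⟩, by omega, by omega, by omega⟩

theorem card_chordInner_add_card_chordOuter (he : IsChord V e) :
    #(chordInner V e) + #(chordOuter V e) = #V + 2 := by
  have := he.fst_lt_snd
  have hunion : chordInner V e ∪ chordOuter V e = V := by
    rw [chordInner, chordOuter, ← filter_or]
    exact filter_true_of_mem fun v _ => by omega
  have hinter : chordInner V e ∩ chordOuter V e = {e.1, e.2} := by
    ext v
    simp only [chordInner, chordOuter, mem_inter, mem_filter, mem_insert, mem_singleton]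
    constructor
    · rintro ⟨⟨-, h⟩, -, h'⟩
      omega
    · rintro (rfl | rfl)
      · exact ⟨⟨he.1, by omega⟩, he.1, by omega⟩
      · exact ⟨⟨he.2.1, by omega⟩, he.2.1, by omega⟩
  rw [← card_union_add_card_inter, hunion, hinter, card_pair (by omega)]

theorem of_nested (he : IsChord V e) (hf : IsChord V f) (hfe : f ≠ e) (h1 : e.1 ≤ f.1)
    (h2 : f.2 ≤ e.2) : IsChord (chordInner V e) f := by
  have := hf.fst_lt_snd
  obtain ⟨hfV1, hfV2, ⟨v, hv, hv1, hv2⟩, -⟩ := hf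
  refine ⟨mem_filter.2 ⟨hfV1, by omega⟩, mem_filter.2 ⟨hfV2, by omega⟩,
    ⟨v, mem_filter.2 ⟨hv, by omega⟩, hv1, hv2⟩, ?_⟩
  by_cases h : e.1 < f.1
  · exact ⟨e.1, mem_filter.2 ⟨he.1, by omega⟩, .inl h⟩
  · refine ⟨e.2, mem_filter.2 ⟨he.2.1, by omega⟩, .inr ?_⟩
    by_contra h'
    exact hfe (Prod.ext (by omega) (by omega))

theorem of_not_nested (he : IsChord V e) (hf : IsChord V f) (hef : ¬Crosses e f)
    (hfe : ¬Crosses f e) (h : ¬(e.1 ≤ f.1 ∧ f.2 ≤ e.2)) : IsChord (chordOuter V e) f := by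
  have := he.fst_lt_snd
  have := hf.fst_lt_snd
  obtain ⟨hfV1, hfV2, ⟨v, hv, hv1, hv2⟩, ⟨x, hx, hx'⟩⟩ := hf
  simp only [Crosses] at hef hfe
  have hsplit : f.2 ≤ e.1 ∨ e.2 ≤ f.1 ∨ (f.1 ≤ e.1 ∧ e.2 ≤ f.2) := by omega
  refine ⟨mem_filter.2 ⟨hfV1, by omega⟩, mem_filter.2 ⟨hfV2, by omega⟩, ?_, ?_⟩
  · rcases hsplit with hs | hs | hs
    · exact ⟨v, mem_filter.2 ⟨hv, by omega⟩, hv1, hv2⟩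
    · exact ⟨v, mem_filter.2 ⟨hv, by omega⟩, hv1, hv2⟩
    · by_cases h' : f.1 < e.1
      · exact ⟨e.1, mem_filter.2 ⟨he.1, by omega⟩, h', by omega⟩
      · exact ⟨e.2, mem_filter.2 ⟨he.2.1, by omega⟩, by omega, by omega⟩
  · rcases hsplit with hs | hs | hs
    · exact ⟨e.2, mem_filter.2 ⟨he.2.1, by omega⟩, by omega⟩
    · exact ⟨e.1, mem_filter.2 ⟨he.1, by omega⟩, by omega⟩
    · exact ⟨x, mem_filter.2 ⟨hx, by omega⟩, hx'⟩

end IsChord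

theorem card_le_card_sub_three_of_noncrossing {V : Finset ℕ} {S : Finset (ℕ × ℕ)}
    (hS : ∀ e ∈ S, IsChord V e) (hnc : ∀ e ∈ S, ∀ f ∈ S, ¬Crosses e f) : #S ≤ #V - 3 := by
  induction S using Finset.strongInduction generalizing V with
  | H S ih =>
  obtain rfl | ⟨e, he⟩ := S.eq_empty_or_nonempty
  · simp
  -- `e` cuts the polygon into two with `#V + 2` vertices in total, and every other chord of `S`
  -- is a chord of one of them.
  have he_nested : e ∈ S.filter fun f => e.1 ≤ f.1 ∧ f.2 ≤ e.2 := mem_filter.2 ⟨he, le_rfl, le_rfl⟩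
  set inner := (S.filter fun f => e.1 ≤ f.1 ∧ f.2 ≤ e.2).erase e
  set outer := S.filter fun f => ¬(e.1 ≤ f.1 ∧ f.2 ≤ e.2)
  have h_inner : #inner ≤ #(chordInner V e) - 3 := by
    refine ih _ ((erase_ssubset he_nested).trans_le (filter_subset _ _)) (fun f hf => ?_)
      fun f hf g hg => hnc f (mem_of_mem_filter f (mem_of_mem_erase hf))
        g (mem_of_mem_filter g (mem_of_mem_erase hg))
    obtain ⟨hfe, hfS, hf1, hf2⟩ : f ≠ e ∧ f ∈ S ∧ e.1 ≤ f.1 ∧ f.2 ≤ e.2 := by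
      simpa [inner, and_assoc] using hf
    exact (hS e he).of_nested (hS f hfS) hfe hf1 hf2
  have h_outer : #outer ≤ #(chordOuter V e) - 3 := by
    refine ih _ (filter_ssubset.2 ⟨e, he, by simp⟩) (fun f hf => ?_)
      fun f hf g hg => hnc f (mem_of_mem_filter f hf) g (mem_of_mem_filter g hg)
    obtain ⟨hfS, hnest⟩ := mem_filter.1 hf
    exact (hS e he).of_not_nested (hS f hfS) (hnc e he f hfS) (hnc f hfS e he) hnest
  have h_card : #S = #inner + 1 + #outer := by
    rw [card_erase_add_one he_nested, card_filter_add_card_filter_not]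
  have := (hS e he).card_chordInner_add_card_chordOuter
  have := (hS e he).two_lt_card_chordInner
  have := (hS e he).two_lt_card_chordOuter
  omega

namespace Triangulation

variable {n : ℕ}

section

variable (T : Triangulation n)

/-- The edges counted by `Triangulation.out`. -/
def edges : Finset (ℕ × ℕ) := insert (0, n + 1) T.diag

def outUpTo (a c : ℕ) : ℕ := #{e ∈ T.edges | e.1 = a ∧ e.2 ≤ c}

theorem hull_notMem_diag : (0, n + 1) ∉ T.diag := fun h => (T.isDiag _ h).2.2 ⟨rfl, rfl⟩

theorem diag_eq_erase_edges : T.diag = T.edges.erase (0, n + 1) :=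
  (erase_insert T.hull_notMem_diag).symm

theorem card_edges (hn : 1 ≤ n) : #T.edges = n := by
  rw [edges, card_insert_of_notMem T.hull_notMem_diag, T.card_diag]
  omega

theorem mem_edges {e : ℕ × ℕ} : e ∈ T.edges ↔ e = (0, n + 1) ∨ e ∈ T.diag := mem_insert

theorem bounds_of_mem_edges (hn : 1 ≤ n) {e : ℕ × ℕ} (he : e ∈ T.edges) :
    e.1 + 2 ≤ e.2 ∧ e.2 ≤ n + 1 := by
  rcases T.mem_edges.1 he with rfl | he
  · exact ⟨by simpa using hn, le_rfl⟩
  · exact ⟨(T.isDiag e he).1, (T.isDiag e he).2.1⟩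

theorem not_crosses_of_mem_edges (hn : 1 ≤ n) {e f : ℕ × ℕ} (he : e ∈ T.edges)
    (hf : f ∈ T.edges) : ¬Crosses e f := by
  rcases T.mem_edges.1 he with rfl | he'
  · have := T.bounds_of_mem_edges hn hf
    simp only [Crosses]; omega
  rcases T.mem_edges.1 hf with rfl | hf'
  · simp [Crosses]
  · exact T.noncross e he' f hf'

theorem isChord_Icc_of_nested (hn : 1 ≤ n) {a b : ℕ} {f : ℕ × ℕ} (hf : f ∈ T.edges)
    (hfab : f ≠ (a, b)) (h1 : a ≤ f.1) (h2 : f.2 ≤ b) : IsChord (Icc a b) f := by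
  have := T.bounds_of_mem_edges hn hf
  have hne : a < f.1 ∨ f.2 < b := by
    by_contra! h
    exact hfab (Prod.ext (by omega) (by omega))
  simp only [IsChord, mem_Icc]
  refine ⟨by omega, by omega, ⟨f.1 + 1, by omega, by omega, by omega⟩, ?_⟩
  rcases hne with h | h
  · exact ⟨a, by omega, by omega⟩
  · exact ⟨b, by omega, by omega⟩

theorem isChord_of_not_touching (hn : 1 ≤ n) {a β c : ℕ} {f : ℕ × ℕ} (haβ : (a, β) ∈ T.edges)
    (hcβ : c ≤ β) (hf : f ∈ T.edges) (hf0 : f ≠ (0, n + 1))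
    (hft : ¬(f.1 = a ∧ f.2 ≤ c ∨ a < f.1 ∧ f.1 < c)) : IsChord (Icc 0 a ∪ Icc c (n + 1)) f := by
  have hβ : a + 2 ≤ β ∧ β ≤ n + 1 := T.bounds_of_mem_edges hn haβ
  have hfb := T.bounds_of_mem_edges hn hf
  have hfβ := T.not_crosses_of_mem_edges hn hf haβ
  have hf0' : ¬(f.1 = 0 ∧ f.2 = n + 1) := fun h => hf0 (Prod.ext h.1 h.2)
  simp only [Crosses] at hfβ
  simp only [IsChord, mem_union, mem_Icc]
  refine ⟨by omega, by omega, ?_, ?_⟩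
  · by_cases hs : f.2 ≤ a ∨ c ≤ f.1
    · exact ⟨f.1 + 1, by omega, by omega, by omega⟩
    · by_cases h' : f.1 < a
      · exact ⟨a, by omega, by omega, by omega⟩
      · exact ⟨c, by omega, by omega, by omega⟩
  · by_cases h0 : f.1 = 0
    · exact ⟨n + 1, by omega, by omega⟩
    · exact ⟨0, by omega, by omega⟩

theorem out_eq_card (v : ℕ) : T.out v = #{e ∈ T.edges | e.1 = v} := by
  rw [Triangulation.out, edges, filter_insert]
  split_ifs with h₁ h₂ h₂
  · rw [card_insert_of_notMem fun h => T.hull_notMem_diag (mem_of_mem_filter _ h)]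
  · exact absurd h₁.symm h₂
  · exact absurd h₂.symm h₁
  · rfl

theorem out_eq_zero_of_le (hn : 1 ≤ n) {v : ℕ} (hv : n ≤ v) : T.out v = 0 := by
  rw [out_eq_card, card_eq_zero, filter_eq_empty_iff]
  intro e he hev
  have := T.bounds_of_mem_edges hn he
  omega

theorem sum_out_Ioo (a c : ℕ) :
    ∑ v ∈ Ioo a c, T.out v = #{e ∈ T.edges | a < e.1 ∧ e.1 < c} := by
  rw [card_eq_sum_card_fiberwise (f := Prod.fst) (t := Ioo a c)
    fun e he => mem_Ioo.2 (mem_filter.1 he).2]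
  refine sum_congr rfl fun v hv => ?_
  rw [out_eq_card, filter_filter]
  congr 1
  exact filter_congr fun e _ => ⟨fun h => ⟨h ▸ mem_Ioo.1 hv, h⟩, And.right⟩

theorem outUpTo_zero (hn : 1 ≤ n) (a : ℕ) : T.outUpTo a 0 = 0 := by
  rw [outUpTo, card_eq_zero, filter_eq_empty_iff]
  intro e he h
  have := T.bounds_of_mem_edges hn he
  omega

theorem outUpTo_succ (a c : ℕ) :
    T.outUpTo a (c + 1) = T.outUpTo a c + if (a, c + 1) ∈ T.edges then 1 else 0 := by
  have : {e ∈ T.edges | e.1 = a ∧ e.2 ≤ c + 1}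
      = {e ∈ T.edges | e.1 = a ∧ e.2 ≤ c} ∪ {e ∈ T.edges | e = (a, c + 1)} := by
    rw [← filter_or]
    refine filter_congr fun e _ => ?_
    rw [Prod.ext_iff]
    omega
  rw [outUpTo, this, card_union_of_disjoint, outUpTo, filter_eq' T.edges (a, c + 1)]
  · split_ifs <;> simp
  · exact disjoint_filter.2 fun e _ h h' => by rw [h'] at h; omega

theorem add_sum_out_add_outUpTo_le (hn : 1 ≤ n) {a b : ℕ} (hab : (a, b) ∈ T.edges) :
    a + 1 + ∑ v ∈ Ioo a b, T.out v + T.outUpTo a b ≤ b := by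
  have hb : a + 2 ≤ b ∧ b ≤ n + 1 := T.bounds_of_mem_edges hn hab
  set nested := {e ∈ T.edges | a ≤ e.1 ∧ e.2 ≤ b}
  have h_nested : #nested ≤ b - a - 1 := by
    have hchords := card_le_card_sub_three_of_noncrossing (V := Icc a b) (S := nested.erase (a, b))
      ?_ fun e he f hf => T.not_crosses_of_mem_edges hn (mem_of_mem_filter e (mem_of_mem_erase he))
        (mem_of_mem_filter f (mem_of_mem_erase hf))
    · rw [Nat.card_Icc] at hchords
      have := card_erase_add_one (s := nested) (mem_filter.2 ⟨hab, le_rfl, le_rfl⟩)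
      omega
    intro f hf
    obtain ⟨hfab, hfE, hf1, hf2⟩ : f ≠ (a, b) ∧ f ∈ T.edges ∧ a ≤ f.1 ∧ f.2 ≤ b := by
      simpa [nested, and_assoc] using hf
    exact T.isChord_Icc_of_nested hn hfE hfab hf1 hf2
  have h_sub : {e ∈ T.edges | e.1 = a ∧ e.2 ≤ b} ∪ {e ∈ T.edges | a < e.1 ∧ e.1 < b} ⊆ nested := by
    rw [← filter_or]
    refine monotone_filter_right _ fun e he h => ?_
    have := T.not_crosses_of_mem_edges hn hab he
    simp only [Crosses] at this
    omega
  have h_disj : Disjoint {e ∈ T.edges | e.1 = a ∧ e.2 ≤ b} {e ∈ T.edges | a < e.1 ∧ e.1 < b} :=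
    disjoint_filter.2 fun e _ h h' => by omega
  have := card_le_card h_sub
  rw [card_union_of_disjoint h_disj] at this
  rw [sum_out_Ioo, outUpTo]
  omega

theorem le_add_sum_out_add_outUpTo (hn : 1 ≤ n) {a β c : ℕ} (haβ : (a, β) ∈ T.edges)
    (hac : a < c) (hcβ : c ≤ β) :
    c ≤ a + 1 + ∑ v ∈ Ioo a c, T.out v + T.outUpTo a c := by
  have hβ : a + 2 ≤ β ∧ β ≤ n + 1 := T.bounds_of_mem_edges hn haβ
  set rest := {e ∈ T.edges | ¬(e.1 = a ∧ e.2 ≤ c ∨ a < e.1 ∧ e.1 < c)}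
  have h_touch : #{e ∈ T.edges | e.1 = a ∧ e.2 ≤ c ∨ a < e.1 ∧ e.1 < c}
      ≤ T.outUpTo a c + ∑ v ∈ Ioo a c, T.out v := by
    rw [filter_or, sum_out_Ioo]
    exact card_union_le _ _
  have h_chords : #(rest.erase (0, n + 1)) ≤ (a + 1 + (n + 2 - c)) - 3 := by
    have hV : #(Icc 0 a ∪ Icc c (n + 1)) = a + 1 + (n + 2 - c) := by
      rw [card_union_of_disjoint (disjoint_left.2 fun v h h' => by
        rw [mem_Icc] at h h'; omega), Nat.card_Icc, Nat.card_Icc]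
      omega
    rw [← hV]
    refine card_le_card_sub_three_of_noncrossing (fun f hf => ?_) fun e he f hf =>
      T.not_crosses_of_mem_edges hn (mem_of_mem_filter e (mem_of_mem_erase he))
        (mem_of_mem_filter f (mem_of_mem_erase hf))
    obtain ⟨hf0, hfE, hf⟩ : f ≠ (0, n + 1) ∧ f ∈ T.edges ∧
        ¬(f.1 = a ∧ f.2 ≤ c ∨ a < f.1 ∧ f.1 < c) := by
      simpa [rest, and_assoc] using hf
    exact T.isChord_of_not_touching hn haβ hcβ hfE hf0 hf
  have h_rest : #rest ≤ a + n + 1 - c := by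
    by_cases h0 : (0, n + 1) ∈ rest
    · have := card_erase_add_one h0
      simp only [rest, mem_filter] at h0
      omega
    · rw [erase_eq_of_notMem h0] at h_chords
      omega
  have h_total : #{e ∈ T.edges | e.1 = a ∧ e.2 ≤ c ∨ a < e.1 ∧ e.1 < c} + #rest = n := by
    rw [card_filter_add_card_filter_not, T.card_edges hn]
  omega

end

variable {T T' : Triangulation n}

theorem ext (h : T.diag = T'.diag) : T = T' := by
  cases T; cases T'; cases h; rfl

theorem mem_edges_of_outUpTo_eq (hn : 1 ≤ n) (hout : ∀ v, T.out v = T'.out v) {a c : ℕ}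
    (hN : T.outUpTo a c = T'.outUpTo a c) (h : (a, c + 1) ∈ T.edges) :
    (a, c + 1) ∈ T'.edges := by
  by_contra h'
  have hT := T.add_sum_out_add_outUpTo_le hn h
  rw [outUpTo_succ, if_pos h] at hT
  -- `T'` has as many edges at `a` as `T`, but fewer of them end by `c + 1`.
  obtain ⟨e, he, rfl, hβ⟩ : ∃ e ∈ T'.edges, e.1 = a ∧ c + 1 < e.2 := by
    by_contra! hno
    have h_le : T'.out a ≤ T'.outUpTo a (c + 1) := by
      rw [out_eq_card, outUpTo]
      exact card_le_card (monotone_filter_right _ fun e he hea => ⟨hea, hno e he hea⟩)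
    have h_ge : T.outUpTo a (c + 1) ≤ T.out a := by
      rw [out_eq_card, outUpTo]
      exact card_le_card (monotone_filter_right _ fun e _ hea => hea.1)
    rw [outUpTo_succ, if_neg h'] at h_le
    rw [outUpTo_succ, if_pos h] at h_ge
    have := hout a
    omega
  have hT' := T'.le_add_sum_out_add_outUpTo hn he (by omega) hβ.le
  have hsum : ∑ v ∈ Ioo e.1 (c + 1), T.out v = ∑ v ∈ Ioo e.1 (c + 1), T'.out v :=
    sum_congr rfl fun v _ => hout v
  rw [outUpTo_succ, if_neg h', ← hsum] at hT'
  omega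

theorem outUpTo_eq_of_out_eq (hn : 1 ≤ n) (hout : ∀ v, T.out v = T'.out v) (a c : ℕ) :
    T.outUpTo a c = T'.outUpTo a c := by
  induction c with
  | zero => rw [outUpTo_zero T hn, outUpTo_zero T' hn]
  | succ c ih =>
    have hmem : (a, c + 1) ∈ T.edges ↔ (a, c + 1) ∈ T'.edges :=
      ⟨mem_edges_of_outUpTo_eq hn hout ih,
        mem_edges_of_outUpTo_eq hn (fun v => (hout v).symm) ih.symm⟩
    rw [outUpTo_succ, outUpTo_succ, ih, if_congr hmem rfl rfl]

theorem edges_subset_of_out_eq (hn : 1 ≤ n) (hout : ∀ v, T.out v = T'.out v) :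
    T.edges ⊆ T'.edges := by
  rintro ⟨a, b⟩ he
  have hb : a + 2 ≤ b ∧ b ≤ n + 1 := T.bounds_of_mem_edges hn he
  obtain ⟨c, rfl⟩ : ∃ c, b = c + 1 := ⟨b - 1, by omega⟩
  exact mem_edges_of_outUpTo_eq hn hout (outUpTo_eq_of_out_eq hn hout a c) he

theorem out_eq_of_outList_eq (hn : 1 ≤ n) (h : T.outList = T'.outList) (v : ℕ) :
    T.out v = T'.out v := by
  by_cases hv : v < n
  · exact List.map_eq_map_iff.1 h v (List.mem_range.2 hv)
  · rw [T.out_eq_zero_of_le hn (not_lt.1 hv), T'.out_eq_zero_of_le hn (not_lt.1 hv)]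

end Triangulation

/-- Two triangulations of a convex `(n+2)`-gon with the same outdegree
sequence are equal. -/
theorem stmt7 (n : ℕ) (T T' : Triangulation n) (h : T.outList = T'.outList) :
    T = T' := by
  apply Triangulation.ext
  rcases Nat.eq_zero_or_pos n with rfl | hn
  · exact (card_eq_zero.1 T.card_diag).trans (card_eq_zero.1 T'.card_diag).symm
  have hout := Triangulation.out_eq_of_outList_eq hn h
  rw [T.diag_eq_erase_edges, T'.diag_eq_erase_edges,
    (Triangulation.edges_subset_of_out_eq hn hout).antisymm
      (Triangulation.edges_subset_of_out_eq hn fun v => (hout v).symm)]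
end

section
/- Every t-gonal tiling of a convex polygon with at least 2t-2 points has at least two ears, and at least one ear is not incident to the edge p_1 p_{n+2}. -/
/-!
An interior edge `(a, b)` of a face `F` cuts off an ear inside `[a, b]`. First, some face lies in
`[a, b]`: `F` itself, or, if `F` lies on the far side, the face `G` on the hull edge `(a, a + 1)`.
Indeed a face with vertices on both sides of `(a, b)` must pass through `a` and `b`, and two faces
meeting only in `a` and `b`, both reaching the far side of the chord and one of them also its near
side, would have two crossing edges. A face inside `[a, b]` is an ear or has a second interior edge,
spanning a strictly shorter interval, so induction on `b - a` applies.
The face on `p₁ p_{n+2}` is not the whole polygon (`t < n + 2`), so it has an interior edge and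
hence an ear avoiding `p₁ p_{n+2}`; either it is an ear itself, or it has two interior edges, whose
intervals overlap in at most one point and so contain distinct ears.
-/

theorem mem_hullEdges {n c d : ℕ} :
    (c, d) ∈ hullEdges n ↔ (c ≤ n ∧ d = c + 1) ∨ (c = 0 ∧ d = n + 1) := by
  simp only [hullEdges, Finset.mem_union, Finset.mem_image, Finset.mem_range,
    Finset.mem_singleton, Prod.mk.injEq]
  constructor
  · rintro (⟨i, hi, rfl, rfl⟩ | h) <;> omega
  · rintro (⟨hc, rfl⟩ | h)
    · exact Or.inl ⟨c, by omega, rfl, rfl⟩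
    · exact Or.inr h

theorem mem_faceEdges {S : Finset ℕ} {c d : ℕ} :
    (c, d) ∈ faceEdges S ↔ c ∈ S ∧ d ∈ S ∧ c < d ∧
      ((∀ x ∈ S, ¬(c < x ∧ x < d)) ∨ ∀ x ∈ S, c ≤ x ∧ x ≤ d) := by
  simp only [faceEdges, Finset.mem_filter, Finset.mem_product]
  tauto

theorem exists_span_mem_faceEdges {S : Finset ℕ} (hS : 1 < S.card) :
    ∃ c d, (c, d) ∈ faceEdges S ∧ ∀ x ∈ S, c ≤ x ∧ x ≤ d := by
  have hne : S.Nonempty := Finset.card_pos.1 (by omega)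
  have hspan (x : ℕ) (hx : x ∈ S) : S.min' hne ≤ x ∧ x ≤ S.max' hne :=
    ⟨S.min'_le x hx, S.le_max' x hx⟩
  exact ⟨_, _, mem_faceEdges.2 ⟨S.min'_mem hne, S.max'_mem hne,
    S.min'_lt_max'_of_card hS, Or.inr hspan⟩, hspan⟩

theorem exists_faceEdge_around {S : Finset ℕ} {x c₀ d₀ : ℕ} (hx : x ∉ S) (hc₀ : c₀ ∈ S)
    (hd₀ : d₀ ∈ S) (hc₀x : c₀ < x) (hxd₀ : x < d₀) :
    ∃ c d, (c, d) ∈ faceEdges S ∧ c₀ ≤ c ∧ c < x ∧ x < d ∧ d ≤ d₀ ∧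
      ∀ w ∈ S, ¬(c < w ∧ w < d) := by
  have hbelow : (S.filter (· < x)).Nonempty := ⟨c₀, Finset.mem_filter.2 ⟨hc₀, hc₀x⟩⟩
  have habove : (S.filter (x < ·)).Nonempty := ⟨d₀, Finset.mem_filter.2 ⟨hd₀, hxd₀⟩⟩
  set c := (S.filter (· < x)).max' hbelow
  set d := (S.filter (x < ·)).min' habove
  obtain ⟨hc, hcx⟩ := Finset.mem_filter.1 ((S.filter (· < x)).max'_mem hbelow)
  obtain ⟨hd, hxd⟩ := Finset.mem_filter.1 ((S.filter (x < ·)).min'_mem habove)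
  have hgap : ∀ w ∈ S, ¬(c < w ∧ w < d) := by
    rintro w hw ⟨hcw, hwd⟩
    rcases lt_trichotomy w x with h | rfl | h
    · exact hcw.not_ge ((S.filter (· < x)).le_max' w (Finset.mem_filter.2 ⟨hw, h⟩))
    · exact hx hw
    · exact hwd.not_ge ((S.filter (x < ·)).min'_le w (Finset.mem_filter.2 ⟨hw, h⟩))
  exact ⟨c, d, mem_faceEdges.2 ⟨hc, hd, hcx.trans hxd, Or.inl hgap⟩,
    (S.filter (· < x)).le_max' c₀ (Finset.mem_filter.2 ⟨hc₀, hc₀x⟩), hcx, hxd,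
    (S.filter (x < ·)).min'_le d₀ (Finset.mem_filter.2 ⟨hd₀, hxd₀⟩), hgap⟩

theorem exists_succ_mem_faceEdges {S : Finset ℕ} {p x : ℕ} (hp : p ∈ S) (hx : x ∈ S)
    (hpx : p < x) : ∃ s, p < s ∧ (p, s) ∈ faceEdges S := by
  by_cases hp₁ : p + 1 ∈ S
  · exact ⟨p + 1, by omega, mem_faceEdges.2 ⟨hp, hp₁, by omega, Or.inl fun w _ => by omega⟩⟩
  · have hx₁ : p + 1 < x := lt_of_le_of_ne hpx fun h => hp₁ (h ▸ hx)
    obtain ⟨c, d, hcd, hpc, hc, hd, -⟩ := exists_faceEdge_around hp₁ hp hx (by omega) hx₁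
    obtain rfl : c = p := by omega
    exact ⟨d, by omega, hcd⟩

theorem exists_pred_mem_faceEdges {S : Finset ℕ} {p x : ℕ} (hp : p ∈ S) (hx : x ∈ S)
    (hxp : x < p) : ∃ s, s < p ∧ (s, p) ∈ faceEdges S := by
  by_cases hp₁ : p - 1 ∈ S
  · exact ⟨p - 1, by omega, mem_faceEdges.2 ⟨hp₁, hp, by omega, Or.inl fun w _ => by omega⟩⟩
  · have hx₁ : x < p - 1 := lt_of_le_of_ne (by omega) fun h => hp₁ (h ▸ hx)
    obtain ⟨c, d, hcd, -, hc, hd, hdp, -⟩ := exists_faceEdge_around hp₁ hx hp hx₁ (by omega)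
    obtain rfl : d = p := by omega
    exact ⟨c, by omega, hcd⟩

theorem eq_range_of_faceEdges_subset_hullEdges {n : ℕ} {S : Finset ℕ}
    (hS : S ⊆ Finset.range (n + 2)) (hcard : 3 ≤ S.card) (hhull : faceEdges S ⊆ hullEdges n) :
    S = Finset.range (n + 2) := by
  obtain ⟨m, M, hmM, hspan⟩ := exists_span_mem_faceEdges (by omega : 1 < S.card)
  obtain ⟨hm, hM, -⟩ := mem_faceEdges.1 hmM
  have hM₁ : M ≠ m + 1 := by
    intro h
    have hsub : S ⊆ {m, M} := fun x hx => by
      have := hspan x hx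
      simp only [Finset.mem_insert, Finset.mem_singleton]
      omega
    have := (Finset.card_le_card hsub).trans Finset.card_le_two
    omega
  obtain ⟨rfl, rfl⟩ : m = 0 ∧ M = n + 1 := by
    have := mem_hullEdges.1 (hhull hmM)
    omega
  refine hS.antisymm fun j hj => ?_
  by_contra hjS
  have hj₀ : 0 < j := Nat.pos_of_ne_zero fun h => hjS (h ▸ hm)
  have hjn : j < n + 1 := lt_of_le_of_ne (by simpa [Nat.lt_succ_iff] using hj)
    fun h => hjS (h ▸ hM)
  obtain ⟨c, d, hcd, -, hcj, hjd, -, hgap⟩ := exists_faceEdge_around hjS hm hM hj₀ hjn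
  rcases mem_hullEdges.1 (hhull hcd) with ⟨-, rfl⟩ | ⟨rfl, rfl⟩
  · omega
  · have hsub : S ⊆ {0, n + 1} := fun x hx => by
      have := hgap x hx
      have := hspan x hx
      simp only [Finset.mem_insert, Finset.mem_singleton]
      omega
    have := (Finset.card_le_card hsub).trans Finset.card_le_two
    omega

theorem notMem_of_zero_mem_of_subset_Icc {n a b : ℕ} {S : Finset ℕ}
    (hS : S ⊆ Finset.Icc a b) (hnh : (a, b) ∉ hullEdges n) (hb : b ≤ n + 1) (h₀ : 0 ∈ S) :
    n + 1 ∉ S := fun h₁ => by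
  have := Finset.mem_Icc.1 (hS h₀)
  have := Finset.mem_Icc.1 (hS h₁)
  rw [mem_hullEdges] at hnh
  omega

theorem le_or_le_of_mem_faceEdges {S : Finset ℕ} {a b c d : ℕ}
    (hab : (a, b) ∈ faceEdges S) (hcd : (c, d) ∈ faceEdges S) (hne : (a, b) ≠ (c, d))
    (hgab : ∀ x ∈ S, ¬(a < x ∧ x < b)) (hgcd : ∀ x ∈ S, ¬(c < x ∧ x < d)) :
    b ≤ c ∨ d ≤ a := by
  obtain ⟨ha, hb, -⟩ := mem_faceEdges.1 hab
  obtain ⟨hc, hd, -⟩ := mem_faceEdges.1 hcd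
  have := hgab c hc
  have := hgab d hd
  have := hgcd a ha
  have := hgcd b hb
  have : a ≠ c ∨ b ≠ d := by simpa only [ne_eq, Prod.mk.injEq, not_and_or] using hne
  omega

namespace Tiling

variable {t n : ℕ} (T : Tiling t n)

theorem le_of_mem {S : Finset ℕ} (hS : S ∈ T.faces) {x : ℕ} (hx : x ∈ S) : x ≤ n + 1 :=
  Nat.lt_succ_iff.1 (Finset.mem_range.1 (T.sub S hS hx))

theorem exists_face_of_mem_hullEdges {e : ℕ × ℕ} (he : e ∈ hullEdges n) :
    ∃ S ∈ T.faces, e ∈ faceEdges S := by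
  obtain ⟨S, hS⟩ := Finset.card_eq_one.1 (T.boundary e he)
  exact ⟨S, Finset.mem_filter.1 (hS ▸ Finset.mem_singleton_self S)⟩

theorem exists_mem_ne_ne (ht : 3 ≤ t) {S : Finset ℕ} (hS : S ∈ T.faces) (a b : ℕ) :
    ∃ z ∈ S, z ≠ a ∧ z ≠ b := by
  by_contra! h
  have hsub : S ⊆ {a, b} := fun x hx => by
    rw [Finset.mem_insert, Finset.mem_singleton]
    exact or_iff_not_imp_left.2 (h x hx)
  have := (Finset.card_le_card hsub).trans Finset.card_le_two
  have := T.size S hS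
  omega

theorem eq_or_eq_of_mem_of_mem {F G : Finset ℕ} (hF : F ∈ T.faces) (hG : G ∈ T.faces)
    (hFG : F ≠ G) {a b : ℕ} (hab : a ≠ b) (haF : a ∈ F) (hbF : b ∈ F) (haG : a ∈ G)
    (hbG : b ∈ G) : ∀ x ∈ F, x ∈ G → x = a ∨ x = b := by
  have hsub : {a, b} ⊆ F ∩ G := by
    simp [Finset.insert_subset_iff, haF, hbF, haG, hbG]
  have heq := Finset.eq_of_subset_of_card_le hsub
    ((T.share F hF G hG hFG).trans (Finset.card_pair hab).ge)
  intro x hxF hxG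
  have hx : x ∈ F ∩ G := Finset.mem_inter.2 ⟨hxF, hxG⟩
  rw [← heq] at hx
  simpa using hx

theorem mem_of_straddle {F G : Finset ℕ} (hF : F ∈ T.faces) (hG : G ∈ T.faces) {c d : ℕ}
    (hcd : (c, d) ∈ faceEdges F) {u v : ℕ} (hu : u ∈ G) (hcu : c < u) (hud : u < d)
    (hv : v ∈ G) (hv' : v < c ∨ d < v) : c ∈ G ∧ d ∈ G := by
  obtain ⟨m, M, hmM, hspan⟩ := exists_span_mem_faceEdges
    (Finset.one_lt_card.2 ⟨u, hu, v, hv, by omega⟩)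
  obtain ⟨hm, hM, -⟩ := mem_faceEdges.1 hmM
  have hmu := hspan u hu
  have hmv := hspan v hv
  constructor
  · by_contra hc
    by_cases hlow : ∃ w ∈ G, w < c
    · obtain ⟨w, hw, hwc⟩ := hlow
      obtain ⟨c', d', he, -, hc', hd', hd'u, -⟩ := exists_faceEdge_around hc hw hu hwc hcu
      exact T.noncross G hG F hF _ he _ hcd ⟨hc', hd', by omega⟩
    · have hcm : c < m := lt_of_le_of_ne (not_lt.1 fun h => hlow ⟨m, hm, h⟩)
        fun h => hc (h ▸ hm)
      exact T.noncross F hF G hG _ hcd _ hmM ⟨hcm, by omega, by omega⟩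
  · by_contra hd
    by_cases hhigh : ∃ w ∈ G, d < w
    · obtain ⟨w, hw, hdw⟩ := hhigh
      obtain ⟨c', d', he, hc', hc'd, hdd', -⟩ := exists_faceEdge_around hd hu hw hud hdw
      exact T.noncross F hF G hG _ hcd _ he ⟨by omega, hc'd, hdd'⟩
    · have hMd : M < d := lt_of_le_of_ne (not_lt.1 fun h => hhigh ⟨M, hM, h⟩)
        fun h => hd (h ▸ hM)
      exact T.noncross G hG F hF _ hmM _ hcd ⟨by omega, by omega, hMd⟩

/-- The first edge leaving `b` upwards in one of the faces is straddled by the other. -/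
theorem false_of_both_above {F G : Finset ℕ} (hF : F ∈ T.faces) (hG : G ∈ T.faces) {a b : ℕ}
    (hab : a < b) (haF : a ∈ F) (hbF : b ∈ F) (haG : a ∈ G) (hbG : b ∈ G)
    (hFG : ∀ x ∈ F, x ∈ G → x = a ∨ x = b) {x y : ℕ} (hx : x ∈ F) (hbx : b < x) (hy : y ∈ G)
    (hby : b < y) : False := by
  obtain ⟨s, hbs, hs⟩ := exists_succ_mem_faceEdges hbF hx hbx
  obtain ⟨s', hbs', hs'⟩ := exists_succ_mem_faceEdges hbG hy hby
  have hsF := (mem_faceEdges.1 hs).2.1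
  have hs'G := (mem_faceEdges.1 hs').2.1
  rcases lt_trichotomy s s' with h | rfl | h
  · have := hFG s' (T.mem_of_straddle hG hF hs' hsF hbs h haF (Or.inl hab)).2 hs'G
    omega
  · have := hFG s hsF hs'G
    omega
  · have := hFG s hsF (T.mem_of_straddle hF hG hs hs'G hbs' h haG (Or.inl hab)).2
    omega

theorem false_of_both_below {F G : Finset ℕ} (hF : F ∈ T.faces) (hG : G ∈ T.faces) {a b : ℕ}
    (hab : a < b) (haF : a ∈ F) (hbF : b ∈ F) (haG : a ∈ G) (hbG : b ∈ G)
    (hFG : ∀ x ∈ F, x ∈ G → x = a ∨ x = b) {x y : ℕ} (hx : x ∈ F) (hxa : x < a) (hy : y ∈ G)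
    (hya : y < a) : False := by
  obtain ⟨s, hsa, hs⟩ := exists_pred_mem_faceEdges haF hx hxa
  obtain ⟨s', hs'a, hs'⟩ := exists_pred_mem_faceEdges haG hy hya
  have hsF := (mem_faceEdges.1 hs).1
  have hs'G := (mem_faceEdges.1 hs').1
  rcases lt_trichotomy s s' with h | rfl | h
  · have := hFG s hsF (T.mem_of_straddle hF hG hs hs'G h hs'a hbG (Or.inr hab)).1
    omega
  · have := hFG s hsF hs'G
    omega
  · have := hFG s' (T.mem_of_straddle hG hF hs' hsF h hsa hbF (Or.inr hab)).1 hs'G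
    omega

theorem false_of_overlap {F G : Finset ℕ} (hF : F ∈ T.faces) (hG : G ∈ T.faces) {a b : ℕ}
    (hab : a < b) (haF : a ∈ F) (hbF : b ∈ F) (haG : a ∈ G) (hbG : b ∈ G)
    (hFG : ∀ x ∈ F, x ∈ G → x = a ∨ x = b) {z : ℕ} (hz : z ∈ F) (hz' : z < a ∨ b < z)
    {u : ℕ} (hu : u ∈ G) (hau : a < u) (hub : u < b) {v : ℕ} (hv : v ∈ G)
    (hv' : v < a ∨ b < v) : False := by
  have hF₂ : 1 < F.card := Finset.one_lt_card.2 ⟨a, haF, z, hz, by omega⟩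
  by_cases hFb : ∃ x ∈ F, b < x <;> by_cases hGb : ∃ y ∈ G, b < y
  · obtain ⟨x, hx, hbx⟩ := hFb
    obtain ⟨y, hy, hby⟩ := hGb
    exact T.false_of_both_above hF hG hab haF hbF haG hbG hFG hx hbx hy hby
  · have hva : v < a := hv'.resolve_right fun h => hGb ⟨v, hv, h⟩
    by_cases hFa : ∃ x ∈ F, x < a
    · obtain ⟨x, hx, hxa⟩ := hFa
      exact T.false_of_both_below hF hG hab haF hbF haG hbG hFG hx hxa hv hva
    · obtain ⟨x, hx, hbx⟩ := hFb
      obtain ⟨c, d, hcd, hspan⟩ := exists_span_mem_faceEdges hF₂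
      have hca := (hspan a haF).1
      have hxd := (hspan x hx).2
      have hac : a ≤ c := not_lt.1 fun h => hFa ⟨c, (mem_faceEdges.1 hcd).1, h⟩
      have := hFG d (mem_faceEdges.1 hcd).2.1
        (T.mem_of_straddle hF hG hcd hu (by omega) (by omega) hv (by omega)).2
      omega
  · have hza : z < a := hz'.resolve_right fun h => hFb ⟨z, hz, h⟩
    by_cases hGa : ∃ y ∈ G, y < a
    · obtain ⟨y, hy, hya⟩ := hGa
      exact T.false_of_both_below hF hG hab haF hbF haG hbG hFG hz hza hy hya
    · have hbv : b < v := hv'.resolve_left fun h => hGa ⟨v, hv, h⟩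
      obtain ⟨c, d, hcd, hspan⟩ := exists_span_mem_faceEdges hF₂
      have hcz := (hspan z hz).1
      have hbd := (hspan b hbF).2
      have hdb : d ≤ b := not_lt.1 fun h => hFb ⟨d, (mem_faceEdges.1 hcd).2.1, h⟩
      have := hFG c (mem_faceEdges.1 hcd).1
        (T.mem_of_straddle hF hG hcd hu (by omega) (by omega) hv (by omega)).1
      omega
  · have hza : z < a := hz'.resolve_right fun h => hFb ⟨z, hz, h⟩
    have hva : v < a := hv'.resolve_right fun h => hGb ⟨v, hv, h⟩
    exact T.false_of_both_below hF hG hab haF hbF haG hbG hFG hz hza hv hva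

theorem nonempty_sdiff_hullEdges (ht : 3 ≤ t) {S : Finset ℕ} (hS : S ∈ T.faces)
    (hSr : S ≠ Finset.range (n + 2)) : (faceEdges S \ hullEdges n).Nonempty := by
  rw [Finset.nonempty_iff_ne_empty, ne_eq, Finset.sdiff_eq_empty_iff_subset]
  exact fun hsub => hSr
    (eq_range_of_faceEdges_subset_hullEdges (T.sub S hS) (T.size S hS ▸ ht) hsub)

theorem one_lt_card_sdiff_hullEdges {S : Finset ℕ} (hS : S ∈ T.faces) (hear : ¬IsEar T S)
    (hne : (faceEdges S \ hullEdges n).Nonempty) : 1 < (faceEdges S \ hullEdges n).card :=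
  lt_of_le_of_ne (Finset.card_pos.2 hne) fun h => hear ⟨hS, h.symm⟩

theorem ne_of_subset_Icc (ht : 3 ≤ t) {S S' : Finset ℕ} (hS : S ∈ T.faces) {a b c d : ℕ}
    (hSab : S ⊆ Finset.Icc a b) (hS'cd : S' ⊆ Finset.Icc c d) (hsep : b ≤ c ∨ d ≤ a) :
    S ≠ S' := by
  rintro rfl
  obtain ⟨x, hx, hxa, hxb⟩ := T.exists_mem_ne_ne ht hS a b
  have := Finset.mem_Icc.1 (hSab hx)
  have := Finset.mem_Icc.1 (hS'cd hx)
  omega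

theorem exists_face_subset_Icc (ht : 3 ≤ t) {F : Finset ℕ} (hF : F ∈ T.faces) {a b : ℕ}
    (hab : (a, b) ∈ faceEdges F) (hnh : (a, b) ∉ hullEdges n) :
    ∃ G ∈ T.faces, G ⊆ Finset.Icc a b := by
  obtain ⟨haF, hbF, hlt, hgap | hspan⟩ := mem_faceEdges.1 hab
  · -- `F` lies on the far side of `(a, b)`; the face on the hull edge `(a, a + 1)` lies inside.
    have hb := T.le_of_mem hF hbF
    rw [mem_hullEdges] at hnh
    obtain ⟨G, hG, hGe⟩ := T.exists_face_of_mem_hullEdges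
      (mem_hullEdges.2 (Or.inl ⟨(by omega : a ≤ n), rfl⟩))
    obtain ⟨haG, ha₁G, -⟩ := mem_faceEdges.1 hGe
    refine ⟨G, hG, fun v hv => Finset.mem_Icc.2 ?_⟩
    by_contra hvab
    obtain ⟨-, hbG⟩ := T.mem_of_straddle hF hG hab ha₁G (by omega) (by omega) hv (by omega)
    have hFG : F ≠ G := by
      rintro rfl
      exact hgap _ ha₁G ⟨by omega, by omega⟩
    obtain ⟨z, hz, hza, hzb⟩ := T.exists_mem_ne_ne ht hF a b
    have := hgap z hz
    exact T.false_of_overlap hF hG hlt haF hbF haG hbG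
      (T.eq_or_eq_of_mem_of_mem hF hG hFG hlt.ne haF hbF haG hbG) hz (by omega) ha₁G
      (by omega) (by omega) hv (by omega)
  · exact ⟨F, hF, fun x hx => Finset.mem_Icc.2 (hspan x hx)⟩

theorem exists_shorter_edge (ht : 3 ≤ t) {G : Finset ℕ} (hG : G ∈ T.faces) {a b : ℕ}
    (hGab : G ⊆ Finset.Icc a b) (hnh : (a, b) ∉ hullEdges n) (hb : b ≤ n + 1)
    (hear : ¬IsEar T G) :
    ∃ c d, (c, d) ∈ faceEdges G ∧ (c, d) ∉ hullEdges n ∧ a ≤ c ∧ d ≤ b ∧ d - c < b - a := by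
  have hne := T.nonempty_sdiff_hullEdges ht hG fun hr =>
    notMem_of_zero_mem_of_subset_Icc hGab hnh hb (hr ▸ Finset.mem_range.2 (by omega))
      (hr ▸ Finset.mem_range.2 (by omega))
  obtain ⟨⟨c, d⟩, hmem, hne'⟩ :=
    Finset.exists_mem_ne (T.one_lt_card_sdiff_hullEdges hG hear hne) (a, b)
  obtain ⟨hcd, hcdh⟩ := Finset.mem_sdiff.1 hmem
  obtain ⟨hc, hd, hlt, -⟩ := mem_faceEdges.1 hcd
  have hc' := Finset.mem_Icc.1 (hGab hc)
  have hd' := Finset.mem_Icc.1 (hGab hd)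
  have : c ≠ a ∨ d ≠ b := by simpa only [ne_eq, Prod.mk.injEq, not_and_or] using hne'
  exact ⟨c, d, hcd, hcdh, hc'.1, hd'.2, by omega⟩

theorem exists_isEar_subset_Icc (ht : 3 ≤ t) {F : Finset ℕ} (hF : F ∈ T.faces) {a b : ℕ}
    (hab : (a, b) ∈ faceEdges F) (hnh : (a, b) ∉ hullEdges n) :
    ∃ S, IsEar T S ∧ S ⊆ Finset.Icc a b := by
  induction h : b - a using Nat.strong_induction_on generalizing F a b with
  | _ k ih =>
  obtain ⟨G, hG, hGab⟩ := T.exists_face_subset_Icc ht hF hab hnh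
  by_cases hear : IsEar T G
  · exact ⟨G, hear, hGab⟩
  obtain ⟨c, d, hcd, hcdh, hac, hdb, hlt⟩ := T.exists_shorter_edge ht hG hGab hnh
    (T.le_of_mem hF (mem_faceEdges.1 hab).2.1) hear
  obtain ⟨S, hS, hScd⟩ := ih (d - c) (by omega) hG hcd hcdh rfl
  exact ⟨S, hS, hScd.trans (Finset.Icc_subset_Icc hac hdb)⟩

theorem gap_of_zero_mem_of_succ_mem {S : Finset ℕ} (hS : S ∈ T.faces) (h₀ : 0 ∈ S)
    (h₁ : n + 1 ∈ S) {a b : ℕ} (hab : (a, b) ∈ faceEdges S) (hnh : (a, b) ∉ hullEdges n) :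
    ∀ x ∈ S, ¬(a < x ∧ x < b) := by
  obtain ⟨-, hb, -, hgap | hspan⟩ := mem_faceEdges.1 hab
  · exact hgap
  · have := hspan 0 h₀
    have := hspan _ h₁
    have := T.le_of_mem hS hb
    rw [mem_hullEdges] at hnh
    omega

end Tiling

theorem stmt10_general (t n : ℕ) (ht : 3 ≤ t) (hbig : 2 * t - 2 ≤ n + 2) (T : Tiling t n) :
    (∃ S S' : Finset ℕ, S ≠ S' ∧ IsEar T S ∧ IsEar T S') ∧
    (∃ S : Finset ℕ, IsEar T S ∧ (0, n + 1) ∉ faceEdges S) := by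
  obtain ⟨S₀, hS₀, hS₀e⟩ := T.exists_face_of_mem_hullEdges (mem_hullEdges.2 (Or.inr ⟨rfl, rfl⟩))
  obtain ⟨h₀, h₁, -⟩ := mem_faceEdges.1 hS₀e
  obtain ⟨⟨a, b⟩, he⟩ := T.nonempty_sdiff_hullEdges ht hS₀ fun h => by
    have := congrArg Finset.card h
    rw [T.size S₀ hS₀, Finset.card_range] at this
    omega
  obtain ⟨hab, habh⟩ := Finset.mem_sdiff.1 he
  obtain ⟨S₁, hS₁, hS₁ab⟩ := T.exists_isEar_subset_Icc ht hS₀ hab habh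
  have hout : (0, n + 1) ∉ faceEdges S₁ := fun h =>
    notMem_of_zero_mem_of_subset_Icc hS₁ab habh (T.le_of_mem hS₀ (mem_faceEdges.1 hab).2.1)
      (mem_faceEdges.1 h).1 (mem_faceEdges.1 h).2.1
  refine ⟨?_, S₁, hS₁, hout⟩
  by_cases hear₀ : IsEar T S₀
  · exact ⟨S₀, S₁, fun h => hout (h ▸ hS₀e), hear₀, hS₁⟩
  obtain ⟨⟨c, d⟩, he', hne⟩ :=
    Finset.exists_mem_ne (T.one_lt_card_sdiff_hullEdges hS₀ hear₀ ⟨_, he⟩) (a, b)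
  obtain ⟨hcd, hcdh⟩ := Finset.mem_sdiff.1 he'
  obtain ⟨S₂, hS₂, hS₂cd⟩ := T.exists_isEar_subset_Icc ht hS₀ hcd hcdh
  have hsep := le_or_le_of_mem_faceEdges hab hcd hne.symm
    (T.gap_of_zero_mem_of_succ_mem hS₀ h₀ h₁ hab habh)
    (T.gap_of_zero_mem_of_succ_mem hS₀ h₀ h₁ hcd hcdh)
  exact ⟨S₁, S₂, T.ne_of_subset_Icc ht hS₁.1 hS₁ab hS₂cd hsep, hS₁, hS₂⟩

/-- Every `t`-gonal tiling of a convex polygon with at least `2t-2` points has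
at least two ears, at least one of which is not incident to the edge
`p_1 p_{n+2}`. -/
theorem stmt10 (t n m : ℕ) (ht : 3 ≤ t) (hm : 1 ≤ m) (hn : n = (t - 2) * m)
    (hbig : 2 * t - 2 ≤ n + 2) (T : Tiling t n) :
    (∃ S S' : Finset ℕ, S ≠ S' ∧ IsEar T S ∧ IsEar T S') ∧
    (∃ S : Finset ℕ, IsEar T S ∧ (0, n + 1) ∉ faceEdges S) :=
  stmt10_general t n ht hbig T
end

section
/- Let M be a non-crossing perfect matching on 2n bitonically k-colored vertices with valid block structure that is not monochromatic. Then M contains a bichromatic edge v_s v_e (s < e) such that: (i) v_s and v_e lie in different blocks S and E; (ii) no bichromatic matching edge has both endpoints strictly between v_s and v_e; (iii) the number of blocks strictly between S and E is odd; and (iv) if v_s is the i-th vertex of S then v_e is the (i+1)-st vertex of E. -/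
open Finset

namespace NCMatching

variable {n : ℕ} (M : NCMatching n)

theorem eq_of_common_vertex {q q' : ℕ × ℕ} (hq : q ∈ M.pairs) (hq' : q' ∈ M.pairs)
    {v : ℕ} (hv : q.1 = v ∨ q.2 = v) (hv' : q'.1 = v ∨ q'.2 = v) : q = q' := by
  have hv2n : v < 2 * n := by
    have := M.mem_lt q hq
    omega
  obtain ⟨p, -, hp⟩ := M.covers v hv2n
  rw [hp q ⟨hq, hv⟩, hp q' ⟨hq', hv'⟩]

theorem out_fst {q : ℕ × ℕ} (hq : q ∈ M.pairs) : M.out q.1 = 1 := by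
  rw [NCMatching.out, card_eq_one]
  refine ⟨q, eq_singleton_iff_unique_mem.mpr ⟨mem_filter.mpr ⟨hq, rfl⟩, fun r hr => ?_⟩⟩
  rw [mem_filter] at hr
  exact M.eq_of_common_vertex hr.1 hq (.inl hr.2) (.inl rfl)

theorem out_snd {q : ℕ × ℕ} (hq : q ∈ M.pairs) : M.out q.2 = 0 := by
  rw [NCMatching.out, card_eq_zero, filter_eq_empty_iff]
  intro r hr hrq
  have hlt := (M.mem_lt r hr).1
  rw [M.eq_of_common_vertex hr hq (.inl hrq) (.inr rfl)] at hlt hrq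
  omega

theorem nested_of_mem_Ioo {p q : ℕ × ℕ} (hp : p ∈ M.pairs) (hq : q ∈ M.pairs)
    (h : q.1 ∈ Ioo p.1 p.2 ∨ q.2 ∈ Ioo p.1 p.2) : p.1 < q.1 ∧ q.2 < p.2 := by
  simp only [mem_Ioo] at h
  have hq12 := (M.mem_lt q hq).1
  have hp12 := (M.mem_lt p hp).1
  have hne : p ≠ q := by
    rintro rfl
    omega
  have h11 : q.1 ≠ p.1 := fun h' => hne (M.eq_of_common_vertex hp hq (.inl rfl) (.inl h'))
  have h12 : q.1 ≠ p.2 := fun h' => hne (M.eq_of_common_vertex hp hq (.inr rfl) (.inl h'))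
  have h21 : q.2 ≠ p.1 := fun h' => hne (M.eq_of_common_vertex hp hq (.inl rfl) (.inr h'))
  have h22 : q.2 ≠ p.2 := fun h' => hne (M.eq_of_common_vertex hp hq (.inr rfl) (.inr h'))
  have := M.noncross p hp q hq
  have := M.noncross q hq p hp
  omega

theorem exists_innermost_bichromatic {α : Type*} (f : ℕ → α)
    (h : ∃ p ∈ M.pairs, f p.1 ≠ f p.2) :
    ∃ p ∈ M.pairs, f p.1 ≠ f p.2 ∧
      ∀ q ∈ M.pairs, p.1 < q.1 → q.2 < p.2 → f q.1 = f q.2 := by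
  classical
  obtain ⟨p, hpB, hmin⟩ :=
    exists_min_image {q ∈ M.pairs | f q.1 ≠ f q.2} (fun q => q.2 - q.1)
      (filter_nonempty_iff.mpr h)
  obtain ⟨hp, hbi⟩ := mem_filter.mp hpB
  refine ⟨p, hp, hbi, fun q hq h1 h2 => ?_⟩
  by_contra hne
  have := hmin q (mem_filter.mpr ⟨hq, hne⟩)
  have := (M.mem_lt q hq).1
  omega

/-- The vertices strictly inside `p` are matched among themselves (`nested_of_mem_Ioo`), and each
such pair contributes two vertices of one colour. -/
theorem even_card_filter_Ioo {α : Type*} [DecidableEq α] {f : ℕ → α} {p : ℕ × ℕ}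
    (hp : p ∈ M.pairs) (hmono : ∀ q ∈ M.pairs, p.1 < q.1 → q.2 < p.2 → f q.1 = f q.2)
    (c : α) :
    Even #{v ∈ Ioo p.1 p.2 | f v = c} := by
  set P := {q ∈ M.pairs | p.1 < q.1 ∧ q.2 < p.2 ∧ f q.1 = c}
  have hP : ∀ q ∈ P, q ∈ M.pairs ∧ p.1 < q.1 ∧ q.2 < p.2 ∧ f q.1 = c := fun q hq =>
    mem_filter.mp hq
  rw [exists_disjoint_union_of_even_card_iff]
  refine ⟨P.image Prod.fst, P.image Prod.snd, ?_, ?_, ?_⟩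
  · ext v
    simp only [mem_union, mem_image, mem_filter]
    constructor
    · rintro (⟨q, hq, rfl⟩ | ⟨q, hq, rfl⟩) <;> obtain ⟨hq, h1, h2, hc⟩ := hP q hq <;>
        have := (M.mem_lt q hq).1
      · exact ⟨mem_Ioo.mpr ⟨h1, by omega⟩, hc⟩
      · exact ⟨mem_Ioo.mpr ⟨by omega, h2⟩, hmono q hq h1 h2 ▸ hc⟩
    · rintro ⟨hv, hc⟩
      have hv2n : v < 2 * n := by
        have := (M.mem_lt p hp).2
        have := mem_Ioo.mp hv
        omega
      obtain ⟨q, ⟨hq, hqv⟩, -⟩ := M.covers v hv2n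
      obtain ⟨h1, h2⟩ := M.nested_of_mem_Ioo hp hq (by rcases hqv with rfl | rfl <;> simp [hv])
      rcases hqv with rfl | rfl
      · exact .inl ⟨q, mem_filter.mpr ⟨hq, h1, h2, hc⟩, rfl⟩
      · exact .inr ⟨q, mem_filter.mpr ⟨hq, h1, h2, hmono q hq h1 h2 ▸ hc⟩, rfl⟩
  · refine disjoint_left.mpr fun v hv1 hv2 => ?_
    obtain ⟨q, hq, rfl⟩ := mem_image.mp hv1
    obtain ⟨q', hq', hqq'⟩ := mem_image.mp hv2
    have hlt := (M.mem_lt q (hP q hq).1).1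
    obtain rfl := M.eq_of_common_vertex (hP q hq).1 (hP q' hq').1 (.inl rfl) (.inr hqq')
    omega
  · rw [card_image_of_injOn, card_image_of_injOn] <;> intro q hq q' hq' hqq'
    · exact M.eq_of_common_vertex (hP q hq).1 (hP q' hq').1 (.inr rfl) (.inr hqq'.symm)
    · exact M.eq_of_common_vertex (hP q hq).1 (hP q' hq').1 (.inl rfl) (.inl hqq'.symm)

end NCMatching

theorem ValidBlock.div_ne {k n : ℕ} {M : NCMatching n} (hvb : ValidBlock k M) {p : ℕ × ℕ}
    (hp : p ∈ M.pairs) : p.1 / k ≠ p.2 / k := by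
  intro h
  have := hvb p.1 p.2 (M.mem_lt p hp).2 h (M.mem_lt p hp).1 (M.out_fst hp)
  rw [M.out_snd hp] at this
  exact zero_ne_one this

/-- The colour of the `r`-th vertex of block `b`: `bitColor k v = blockColor k (v / k) (v % k)`.
On `range k` it is an involution, so `blockColor k b c` is also the position of colour `c` in
block `b`. -/
def blockColor (k b r : ℕ) : ℕ :=
  if b % 2 = 0 then r else k - 1 - r

section blockColor

variable {k b r : ℕ}

theorem blockColor_lt (hr : r < k) : blockColor k b r < k := by
  unfold blockColor; split_ifs <;> omega

theorem blockColor_blockColor (hr : r < k) : blockColor k b (blockColor k b r) = r := by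
  unfold blockColor; split_ifs <;> omega

theorem blockColor_sub : blockColor k b (k - 1 - r) = k - 1 - blockColor k b r := by
  unfold blockColor; split_ifs <;> omega

theorem blockColor_eq_of_mod_two_eq {b' : ℕ} (h : b % 2 = b' % 2) :
    blockColor k b = blockColor k b' := by
  unfold blockColor; rw [h]

theorem blockColor_eq_sub_of_mod_two_ne {b' : ℕ} (h : b % 2 ≠ b' % 2) (hr : r < k) :
    blockColor k b' r = k - 1 - blockColor k b r := by
  unfold blockColor; split_ifs <;> omega

theorem bitColor_mul_add (hr : r < k) : bitColor k (b * k + r) = blockColor k b r := by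
  have hk : 0 < k := by omega
  have hdiv : (b * k + r) / k = b := by
    rw [Nat.add_comm, Nat.add_mul_div_right _ _ hk, Nat.div_eq_of_lt hr, Nat.zero_add]
  rw [bitColor, blockColor, hdiv, Nat.add_comm, Nat.add_mul_mod_self_right, Nat.mod_eq_of_lt hr]

end blockColor

theorem card_filter_bitColor_mul_add_of_card {k a c : ℕ} (hc : c < k)
    (h₀ : #{v ∈ range (a * k) | bitColor k v = c} = a) {r : ℕ} (hr : r ≤ k) :
    #{v ∈ range (a * k + r) | bitColor k v = c} = a + if blockColor k a c < r then 1 else 0 := by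
  induction r with
  | zero => simp [h₀]
  | succ r ih =>
    rw [← Nat.add_assoc, range_add_one, filter_insert, bitColor_mul_add (by omega)]
    by_cases h : blockColor k a c = r
    · rw [if_pos (by rw [← h, blockColor_blockColor hc]), card_insert_of_notMem (by simp),
        ih (by omega)]
      split_ifs <;> omega
    · rw [if_neg fun h' => h (by rw [← h', blockColor_blockColor (by omega)]), ih (by omega)]
      split_ifs <;> omega

theorem card_filter_bitColor_mul_add {k c : ℕ} (hc : c < k) (a : ℕ) {r : ℕ} (hr : r ≤ k) :
    #{v ∈ range (a * k + r) | bitColor k v = c} = a + if blockColor k a c < r then 1 else 0 := by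
  refine card_filter_bitColor_mul_add_of_card hc ?_ hr
  induction a with
  | zero => simp
  | succ a ih =>
    rw [Nat.succ_mul, card_filter_bitColor_mul_add_of_card hc ih le_rfl,
      if_pos (blockColor_lt hc)]

theorem card_filter_range_eq_add (P : ℕ → Prop) [DecidablePred P] {s e : ℕ} (h : s < e) :
    #{v ∈ range e | P v} = #{v ∈ range (s + 1) | P v} + #{v ∈ Ioo s e | P v} := by
  have hU : range e = range (s + 1) ∪ Ioo s e := by
    ext x
    simp only [mem_union, mem_range, mem_Ioo]
    omega
  have hD : Disjoint (range (s + 1)) (Ioo s e) := by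
    rw [disjoint_left]
    intro x h1 h2
    simp only [mem_range, mem_Ioo] at h1 h2
    omega
  rw [hU, filter_union, card_union_of_disjoint (disjoint_filter_filter hD)]

theorem mod_two_eq_of_even_card_filter_bitColor_Ioo {k c s e : ℕ} (hc : c < k) (hse : s < e)
    (heven : Even #{v ∈ Ioo s e | bitColor k v = c}) :
    (e / k + if blockColor k (e / k) c < e % k then 1 else 0) % 2 =
      (s / k + if blockColor k (s / k) c < s % k + 1 then 1 else 0) % 2 := by
  have hk : 0 < k := by omega
  have hsplit := card_filter_range_eq_add (bitColor k · = c) hse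
  have hcount_e := card_filter_bitColor_mul_add hc (e / k) (Nat.mod_lt e hk).le
  have hcount_s :=
    card_filter_bitColor_mul_add hc (s / k) (show s % k + 1 ≤ k from Nat.mod_lt s hk)
  rw [Nat.div_add_mod'] at hcount_e
  rw [show s / k * k + (s % k + 1) = s + 1 by rw [← Nat.add_assoc, Nat.div_add_mod']] at hcount_s
  obtain ⟨t, ht⟩ := heven
  omega

/-- `H c` expresses that colour `c` occurs evenly often strictly between the `i`-th vertex of
block `a` and the `j`-th vertex of block `b` (see `mod_two_eq_of_even_card_filter_bitColor_Ioo`). -/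
theorem eq_succ_and_odd_of_mod_two_eq {k a b i j : ℕ} (hi : i < k) (hj : j < k) (hab : a < b)
    (hne : blockColor k a i ≠ blockColor k b j)
    (H : ∀ c < k, (b + if blockColor k b c < j then 1 else 0) % 2 =
      (a + if blockColor k a c < i + 1 then 1 else 0) % 2) :
    j = i + 1 ∧ Odd (b - a - 1) := by
  by_cases hpar : a % 2 = b % 2
  · rw [← blockColor_eq_of_mod_two_eq hpar] at H
    have h1 := H (blockColor k a i) (blockColor_lt hi)
    rw [blockColor_blockColor hi] at h1
    have hij : i < j := by split_ifs at h1 <;> omega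
    have h2 := H (blockColor k a (i + 1)) (blockColor_lt (show i + 1 < k by omega))
    rw [blockColor_blockColor (by omega)] at h2
    refine ⟨by split_ifs at h2 <;> omega, ?_⟩
    rw [Nat.odd_iff]
    omega
  · exfalso
    have h1 := H (blockColor k a i) (blockColor_lt hi)
    rw [blockColor_eq_sub_of_mod_two_ne hpar (blockColor_lt hi), blockColor_blockColor hi] at h1
    have h2 := H (blockColor k a (k - 1 - j)) (blockColor_lt (show k - 1 - j < k by omega))
    rw [blockColor_eq_sub_of_mod_two_ne hpar (blockColor_lt (by omega)),
      blockColor_blockColor (by omega)] at h2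
    -- tail and head carry the same colours, which forces `v_e` to have the colour of `v_s`
    have hji : j = k - 1 - i := by split_ifs at h1 h2 <;> omega
    rw [blockColor_eq_sub_of_mod_two_ne hpar hj, hji, blockColor_sub] at hne
    have := blockColor_lt (b := a) hi
    omega

theorem stmt13_general (k n : ℕ) (hk : 2 ≤ k) (M : NCMatching n)
    (hvb : ValidBlock k M) (hnm : ¬ Mono k M) :
    ∃ p ∈ M.pairs,
      bitColor k p.1 ≠ bitColor k p.2 ∧
      p.1 / k ≠ p.2 / k ∧
      (∀ q ∈ M.pairs, p.1 < q.1 → q.2 < p.2 → bitColor k q.1 = bitColor k q.2) ∧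
      Odd (p.2 / k - p.1 / k - 1) ∧
      p.2 % k = p.1 % k + 1 := by
  have hk0 : 0 < k := by omega
  obtain ⟨⟨s, e⟩, hp, hbi, hmono⟩ :=
    M.exists_innermost_bichromatic (bitColor k) (by simpa [Mono] using hnm)
  have hblk : s / k ≠ e / k := hvb.div_ne hp
  have hse : s < e := (M.mem_lt _ hp).1
  have hab : s / k < e / k := lt_of_le_of_ne (Nat.div_le_div_right hse.le) hblk
  have hparity := fun c (hc : c < k) =>
    mod_two_eq_of_even_card_filter_bitColor_Ioo hc hse (M.even_card_filter_Ioo hp hmono c)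
  obtain ⟨hj, hodd⟩ :=
    eq_succ_and_odd_of_mod_two_eq (Nat.mod_lt s hk0) (Nat.mod_lt e hk0) hab hbi hparity
  exact ⟨(s, e), hp, hbi, hblk, hmono, hodd, hj⟩

/-- A non-monochromatic matching with valid block structure contains a
bichromatic edge `v_s v_e` satisfying properties (i)-(iv). -/
theorem stmt13 (k n : ℕ) (hk : 2 ≤ k) (hdvd : k ∣ n) (M : NCMatching n)
    (hvb : ValidBlock k M) (hnm : ¬ Mono k M) :
    ∃ p ∈ M.pairs,
      bitColor k p.1 ≠ bitColor k p.2 ∧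
      p.1 / k ≠ p.2 / k ∧
      (∀ q ∈ M.pairs, p.1 < q.1 → q.2 < p.2 → bitColor k q.1 = bitColor k q.2) ∧
      Odd (p.2 / k - p.1 / k - 1) ∧
      p.2 % k = p.1 % k + 1 :=
  stmt13_general k n hk M hvb hnm
end
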